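/- arXiv:1610.09851 — 12 statements merged into one kernel-verified Lean document; each statement's English description precedes it below -/
import Mathlib

section
/- Let G be a countable discrete group and let T and T' be minimal free continuous actions of G on locally compact Cantor spaces X and X', respectively. Let A ⊆ X and A' ⊆ X' be nonempty compact open subsets and let θ : A → A' be a homeomorphism such that for every x ∈ A and every g ∈ G: (i) T_g x ∈ A if and only if T'_g(θx) ∈ A', and (ii) θ(T_g x) = T'_g(θx) whenever T_g x ∈ A. Then there exists a homeomorphism θ̃ : X → X' satisfying θ̃ ∘ T_g = T'_g ∘ θ̃ for every g ∈ G and θ̃(x) = θ(x) for all x ∈ A; moreover, θ̃ is the unique homeomorphism from X to X' that intertwines T with T' and extends θ. -/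
/-! Every orbit meets the open set `A` (by minimality), so an equivariant extension of `θ` is forced:
if `g • x ∈ A`, then necessarily `Φ x = g⁻¹ • θ (g • x)`. The compatibility of `θ` with the action
on `A` makes this independent of `g`, hence well defined, equivariant and, being locally a
composite of continuous maps, continuous. The same construction applied to `θ.symm` gives an
inverse, because an equivariant map is determined by its values on a set meeting every orbit. -/

open Set

namespace MulAction

variable {G X Y : Type*} [Group G] [MulAction G X] [MulAction G Y]

theorem eq_of_eqOn_of_map_smul {A : Set X} (hA : ∀ x : X, ∃ g : G, g • x ∈ A) {f f' : X → Y}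
    (hf : ∀ (g : G) (x : X), f (g • x) = g • f x) (hf' : ∀ (g : G) (x : X), f' (g • x) = g • f' x)
    (h : EqOn f f' A) : f = f' := by
  funext x
  obtain ⟨g, hg⟩ := hA x
  exact (smul_left_cancel_iff g).mp (by rw [← hf, ← hf', h hg])

variable (G) in
def IsEquivariantOn {A : Set X} (θ : A → Y) : Prop :=
  ∀ (x : A) (g : G) (h : g • (x : X) ∈ A), θ ⟨g • x, h⟩ = g • θ x

theorem IsEquivariantOn.map_eq {A : Set X} {θ : A → Y} (hθ : IsEquivariantOn G θ) {x y : A}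
    {g : G} (h : g • (x : X) = y) : θ y = g • θ x := by
  obtain ⟨y, hy⟩ := y
  subst h
  exact hθ x g hy

theorem IsEquivariantOn.homeomorph_symm [TopologicalSpace X] [TopologicalSpace Y] {A : Set X}
    {B : Set Y} {θ : A ≃ₜ B} (hθ : IsEquivariantOn G fun x => (θ x : Y))
    (hmem : ∀ (x : A) (g : G), g • (θ x : Y) ∈ B → g • (x : X) ∈ A) :
    IsEquivariantOn G fun y => (θ.symm y : X) := by
  intro y g hgy
  have hgx : g • (θ.symm y : X) ∈ A := hmem _ g (by rwa [θ.apply_symm_apply])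
  have hθgx : θ ⟨_, hgx⟩ = ⟨g • y, hgy⟩ := Subtype.ext <| by
    rw [hθ.map_eq (x := θ.symm y) rfl, θ.apply_symm_apply]
  change (θ.symm ⟨g • y, hgy⟩ : X) = g • (θ.symm y : X)
  rw [← hθgx, θ.symm_apply_apply]

noncomputable def extendEquivariant {A : Set X} (hA : ∀ x : X, ∃ g : G, g • x ∈ A) (θ : A → Y)
    (x : X) : Y :=
  (hA x).choose⁻¹ • θ ⟨(hA x).choose • x, (hA x).choose_spec⟩

section extendEquivariant

variable {A : Set X} {hA : ∀ x : X, ∃ g : G, g • x ∈ A} {θ : A → Y}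

theorem IsEquivariantOn.extendEquivariant_eq (hθ : IsEquivariantOn G θ) {x : X} {g : G} {y : A}
    (hy : g • x = y) : extendEquivariant hA θ x = g⁻¹ • θ y := by
  set h := (hA x).choose
  have hθy : θ y = (g * h⁻¹) • θ ⟨h • x, (hA x).choose_spec⟩ :=
    hθ.map_eq (by rw [smul_smul, inv_mul_cancel_right, hy])
  rw [hθy, smul_smul, ← mul_assoc, inv_mul_cancel, one_mul]
  rfl

theorem IsEquivariantOn.extendEquivariant_coe (hθ : IsEquivariantOn G θ) (x : A) :
    extendEquivariant hA θ x = θ x := by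
  rw [hθ.extendEquivariant_eq (one_smul G (x : X)), inv_one, one_smul]

theorem IsEquivariantOn.extendEquivariant_smul (hθ : IsEquivariantOn G θ) (g : G) (x : X) :
    extendEquivariant hA θ (g • x) = g • extendEquivariant hA θ x := by
  set h := (hA x).choose
  have hx : (h * g⁻¹) • g • x = h • x := by rw [smul_smul, inv_mul_cancel_right]
  rw [hθ.extendEquivariant_eq (y := ⟨h • x, (hA x).choose_spec⟩) hx, mul_inv_rev, inv_inv,
    mul_smul]
  rfl

theorem IsEquivariantOn.continuous_extendEquivariant [TopologicalSpace X] [TopologicalSpace Y]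
    [ContinuousConstSMul G X] [ContinuousConstSMul G Y] (hθ : IsEquivariantOn G θ)
    (hAo : IsOpen A) (hθc : Continuous θ) : Continuous (extendEquivariant hA θ) := by
  refine continuous_iff_continuousAt.mpr fun x => ?_
  obtain ⟨g, hg⟩ := hA x
  set U := (g • ·) ⁻¹' A
  have hU : IsOpen U := hAo.preimage (continuous_const_smul g)
  refine ContinuousOn.continuousAt ?_ (hU.mem_nhds hg)
  rw [continuousOn_iff_continuous_domRestrict]
  have hlocal : U.domRestrict (extendEquivariant hA θ) = fun y : U => g⁻¹ • θ ⟨g • (y : X), y.2⟩ :=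
    funext fun y => hθ.extendEquivariant_eq rfl
  rw [hlocal]
  fun_prop

end extendEquivariant

theorem existsUnique_homeomorph_extend [TopologicalSpace X] [TopologicalSpace Y]
    [ContinuousConstSMul G X] [ContinuousConstSMul G Y] {A : Set X} {B : Set Y}
    (hAo : IsOpen A) (hBo : IsOpen B) (hA : ∀ x : X, ∃ g : G, g • x ∈ A)
    (hB : ∀ y : Y, ∃ g : G, g • y ∈ B) (θ : A ≃ₜ B)
    (hmem : ∀ (x : A) (g : G), g • (θ x : Y) ∈ B → g • (x : X) ∈ A)
    (hθ : IsEquivariantOn G fun x => (θ x : Y)) :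
    ∃! Φ : X ≃ₜ Y, (∀ (g : G) (x : X), Φ (g • x) = g • Φ x) ∧ ∀ x : A, Φ x = θ x := by
  have hθ' := hθ.homeomorph_symm hmem
  set φ := extendEquivariant hA fun x => (θ x : Y)
  set ψ := extendEquivariant hB fun y => (θ.symm y : X)
  have hφ : ∀ (g : G) (x : X), φ (g • x) = g • φ x := hθ.extendEquivariant_smul
  have hψ : ∀ (g : G) (y : Y), ψ (g • y) = g • ψ y := hθ'.extendEquivariant_smul
  have hψφ : ψ ∘ φ = id := eq_of_eqOn_of_map_smul hA (by simp [hφ, hψ]) (by simp) fun x hx => by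
    simp [φ, ψ, hθ.extendEquivariant_coe ⟨x, hx⟩, hθ'.extendEquivariant_coe]
  have hφψ : φ ∘ ψ = id := eq_of_eqOn_of_map_smul hB (by simp [hφ, hψ]) (by simp) fun y hy => by
    simp [φ, ψ, hθ'.extendEquivariant_coe ⟨y, hy⟩, hθ.extendEquivariant_coe]
  refine ⟨⟨⟨φ, ψ, congrFun hψφ, congrFun hφψ⟩, hθ.continuous_extendEquivariant hAo (by fun_prop),
    hθ'.continuous_extendEquivariant hBo (by fun_prop)⟩, ⟨hφ, hθ.extendEquivariant_coe⟩, ?_⟩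
  rintro Φ ⟨hΦ, hΦθ⟩
  exact Homeomorph.ext <| congrFun <| eq_of_eqOn_of_map_smul hA hΦ hφ fun x hx => by
    simp [hΦθ ⟨x, hx⟩, φ, hθ.extendEquivariant_coe ⟨x, hx⟩]

end MulAction

theorem stmt0_general
    {G : Type*} [Group G]
    {X X' : Type*}
    [TopologicalSpace X]
    [TopologicalSpace X']
    (T : G → X ≃ₜ X) (T' : G → X' ≃ₜ X')
    (hTmul : ∀ g h x, T (g * h) x = T g (T h x))
    (hT'mul : ∀ g h x, T' (g * h) x = T' g (T' h x))
    (hTone : ∀ x, T 1 x = x) (hT'one : ∀ x, T' 1 x = x)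
    (hmin : ∀ x : X, Dense (Set.range fun g : G => T g x))
    (hmin' : ∀ x : X', Dense (Set.range fun g : G => T' g x))
    (A : Set X) (A' : Set X')
    (hAo : IsOpen A) (hAne : A.Nonempty)
    (hA'o : IsOpen A')
    (θ : A ≃ₜ A')
    (hiff : ∀ (x : A) (g : G), T g (x : X) ∈ A ↔ T' g ((θ x : A') : X') ∈ A')
    (heq : ∀ (x : A) (g : G) (h : T g (x : X) ∈ A),
      ((θ ⟨T g (x : X), h⟩ : A') : X') = T' g ((θ x : A') : X')) :
    ∃! Φ : X ≃ₜ X',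
      (∀ (g : G) (x : X), Φ (T g x) = T' g (Φ x)) ∧
      (∀ x : A, Φ (x : X) = ((θ x : A') : X')) := by
  -- With these instances `g • x` unfolds to `T g x`, so `heq` and the goal are the general ones.
  let _ : MulAction G X := { smul := fun g x => T g x, one_smul := hTone, mul_smul := hTmul }
  let _ : MulAction G X' := { smul := fun g x => T' g x, one_smul := hT'one, mul_smul := hT'mul }
  have : ContinuousConstSMul G X := ⟨fun g => (T g).continuous⟩
  have : ContinuousConstSMul G X' := ⟨fun g => (T' g).continuous⟩
  have : MulAction.IsMinimal G X := ⟨hmin⟩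
  have : MulAction.IsMinimal G X' := ⟨hmin'⟩
  obtain ⟨a, ha⟩ := hAne
  exact MulAction.existsUnique_homeomorph_extend hAo hA'o
    (fun x => hAo.exists_smul_mem G x ⟨a, ha⟩)
    (fun y => hA'o.exists_smul_mem G y ⟨_, (θ ⟨a, ha⟩).2⟩) θ (fun x g => (hiff x g).mpr) heq

theorem stmt0
    {G : Type*} [Group G] [Countable G]
    {X X' : Type*}
    [TopologicalSpace X] [LocallyCompactSpace X] [SecondCountableTopology X]
    [T2Space X] [TotallyDisconnectedSpace X] [PerfectSpace X] [Nonempty X]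
    [TopologicalSpace X'] [LocallyCompactSpace X'] [SecondCountableTopology X']
    [T2Space X'] [TotallyDisconnectedSpace X'] [PerfectSpace X'] [Nonempty X']
    (T : G → X ≃ₜ X) (T' : G → X' ≃ₜ X')
    (hTmul : ∀ g h x, T (g * h) x = T g (T h x))
    (hT'mul : ∀ g h x, T' (g * h) x = T' g (T' h x))
    (hTone : ∀ x, T 1 x = x) (hT'one : ∀ x, T' 1 x = x)
    (hmin : ∀ x : X, Dense (Set.range fun g : G => T g x))
    (hmin' : ∀ x : X', Dense (Set.range fun g : G => T' g x))
    (hfree : ∀ (g : G) (x : X), T g x = x → g = 1)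
    (hfree' : ∀ (g : G) (x : X'), T' g x = x → g = 1)
    (A : Set X) (A' : Set X')
    (hAc : IsCompact A) (hAo : IsOpen A) (hAne : A.Nonempty)
    (hA'c : IsCompact A') (hA'o : IsOpen A')
    (θ : A ≃ₜ A')
    (hiff : ∀ (x : A) (g : G), T g (x : X) ∈ A ↔ T' g ((θ x : A') : X') ∈ A')
    (heq : ∀ (x : A) (g : G) (h : T g (x : X) ∈ A),
      ((θ ⟨T g (x : X), h⟩ : A') : X') = T' g ((θ x : A') : X')) :
    ∃! Φ : X ≃ₜ X',
      (∀ (g : G) (x : X), Φ (T g x) = T' g (Φ x)) ∧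
      (∀ x : A, Φ (x : X) = ((θ x : A') : X')) :=
  stmt0_general T T' hTmul hT'mul hTone hT'one hmin hmin' A A' hAo hAne hA'o θ hiff heq
end

section
/- Let C, D, E be nonempty finite subsets of the nonnegative integers. Then the identity P_C · P_D = P_E holds in ℤ[X] if and only if (C − C) ∩ (D − D) = {0} and E = C + D. -/
open Polynomial Pointwise

/-! The coefficient of `X ^ n` in `P_C * P_D` is the number of ways of writing `n = c + d` with
`c ∈ C`, `d ∈ D`. So `P_C * P_D = P_E` says exactly that every `n` has at most one such
representation and that the represented `n` form `E`, i.e. `E = C + D`. Unique representation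
means `(c, d) ↦ c + d` is injective on `C × D`, which fails precisely when some nonzero
`c - c' = d' - d` is a common difference; `0` always is one since `C` and `D` are nonempty. -/

namespace Finset

theorem forall_card_filter_eq_ite_iff_injOn_and_eq_image {α β : Type*} [DecidableEq β]
    (s : Finset α) (f : α → β) (t : Finset β) :
    (∀ b, #{a ∈ s | f a = b} = if b ∈ t then 1 else 0) ↔ Set.InjOn f s ∧ t = s.image f := by
  constructor
  · intro h
    refine ⟨fun a₁ ha₁ a₂ ha₂ hf => ?_, ?_⟩
    · have hle : #{a ∈ s | f a = f a₁} ≤ 1 := by rw [h]; split <;> omega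
      exact card_le_one.mp hle a₁ (by simpa using ha₁) a₂ (by simpa [hf] using ha₂)
    · ext b
      have hb := h b
      constructor
      · intro hbt
        rw [if_pos hbt] at hb
        obtain ⟨a, ha⟩ := card_pos.mp (hb ▸ Nat.one_pos)
        simp only [mem_filter] at ha
        exact mem_image.mpr ⟨a, ha⟩
      · intro hbs
        by_contra hbt
        rw [if_neg hbt, card_eq_zero, filter_eq_empty_iff] at hb
        obtain ⟨a, ha, rfl⟩ := mem_image.mp hbs
        exact hb ha rfl
  · rintro ⟨hinj, rfl⟩ b
    split_ifs with hb
    · obtain ⟨a, ha, rfl⟩ := mem_image.mp hb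
      refine card_eq_one.mpr ⟨a, eq_singleton_iff_unique_mem.mpr ⟨by simp [ha], ?_⟩⟩
      intro a' ha'
      rw [mem_filter] at ha'
      exact hinj ha'.1 ha ha'.2
    · rw [card_eq_zero, filter_eq_empty_iff]
      exact fun a ha hab => hb (mem_image.mpr ⟨a, ha, hab⟩)

theorem injOn_add_image_iff {α β F : Type*} [Add α] [Add β] [DecidableEq α] [DecidableEq β]
    [FunLike F α β] [AddHomClass F α β] {f : F} (hf : Function.Injective f) (s t : Finset α) :
    (s.image f ×ˢ t.image f : Set (β × β)).InjOn (fun p => p.1 + p.2) ↔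
      (s ×ˢ t : Set (α × α)).InjOn (fun p => p.1 + p.2) := by
  rw [← card_add_iff, ← card_add_iff, ← image_add, card_image_of_injective _ hf,
    card_image_of_injective _ hf, card_image_of_injective _ hf]

theorem injOn_add_iff_sub_inter_sub_subset {G : Type*} [AddCommGroup G] [DecidableEq G]
    (s t : Finset G) :
    (s ×ˢ t : Set (G × G)).InjOn (fun p => p.1 + p.2) ↔ (s - s) ∩ (t - t) ⊆ {0} := by
  constructor
  · intro hinj z hz
    simp only [mem_inter, mem_sub] at hz
    obtain ⟨⟨a, ha, a', ha', rfl⟩, b', hb', b, hb, hab⟩ := hz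
    have hsum : a + b = a' + b' := by
      rw [add_comm a', ← sub_eq_sub_iff_add_eq_add, hab]
    have := congrArg Prod.fst (hinj (Set.mk_mem_prod ha hb) (Set.mk_mem_prod ha' hb') hsum)
    simpa [sub_eq_zero] using this
  · rintro h ⟨a, b⟩ ⟨ha, hb⟩ ⟨a', b'⟩ ⟨ha', hb'⟩ (hsum : a + b = a' + b')
    have hdiff : a - a' ∈ (s - s) ∩ (t - t) :=
      mem_inter.mpr ⟨sub_mem_sub ha ha', mem_sub.mpr ⟨b', hb', b, hb, by
        rw [sub_eq_sub_iff_add_eq_add, hsum, add_comm]⟩⟩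
    have haa : a = a' := sub_eq_zero.mp (mem_singleton.mp (h hdiff))
    subst haa
    simp_all

end Finset

namespace Polynomial

open Finset

theorem coeff_sum_X_pow_mul_sum_X_pow {R : Type*} [Semiring R] (C D : Finset ℕ) (n : ℕ) :
    ((∑ c ∈ C, (X : R[X]) ^ c) * ∑ d ∈ D, (X : R[X]) ^ d).coeff n =
      #{p ∈ C ×ˢ D | p.1 + p.2 = n} := by
  simp only [sum_mul_sum, ← pow_add, ← sum_product', finsetSum_coeff, coeff_X_pow, sum_boole,
    eq_comm]

theorem coeff_sum_X_pow {R : Type*} [Semiring R] (E : Finset ℕ) (n : ℕ) :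
    (∑ e ∈ E, (X : R[X]) ^ e).coeff n = if n ∈ E then 1 else 0 := by
  simp [finsetSum_coeff, coeff_X_pow]

end Polynomial

theorem stmt1_general (C D E : Finset ℕ) (hC : C.Nonempty) (hD : D.Nonempty) :
    (∑ c ∈ C, (X : ℤ[X]) ^ c) * (∑ d ∈ D, (X : ℤ[X]) ^ d) = ∑ e ∈ E, (X : ℤ[X]) ^ e ↔
      ((C.image (Nat.cast : ℕ → ℤ) - C.image (Nat.cast : ℕ → ℤ)) ∩
          (D.image (Nat.cast : ℕ → ℤ) - D.image (Nat.cast : ℕ → ℤ)) = {0} ∧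
        E = C + D) := by
  have hdiff_nonempty : ((C.image (Nat.cast : ℕ → ℤ) - C.image (Nat.cast : ℕ → ℤ)) ∩
      (D.image (Nat.cast : ℕ → ℤ) - D.image (Nat.cast : ℕ → ℤ))).Nonempty :=
    ⟨0, Finset.mem_inter.mpr ⟨(hC.image _).zero_mem_sub, (hD.image _).zero_mem_sub⟩⟩
  rw [Polynomial.ext_iff]
  simp only [Polynomial.coeff_sum_X_pow_mul_sum_X_pow, Polynomial.coeff_sum_X_pow]
  norm_cast
  rw [Finset.forall_card_filter_eq_ite_iff_injOn_and_eq_image, ← Finset.add_def,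
    Finset.coe_product,
    ← Finset.injOn_add_image_iff (f := Nat.castAddMonoidHom ℤ) Nat.cast_injective,
    Nat.coe_castAddMonoidHom, Finset.injOn_add_iff_sub_inter_sub_subset,
    hdiff_nonempty.subset_singleton_iff]

theorem stmt1 (C D E : Finset ℕ) (hC : C.Nonempty) (hD : D.Nonempty) (hE : E.Nonempty) :
    (∑ c ∈ C, (X : ℤ[X]) ^ c) * (∑ d ∈ D, (X : ℤ[X]) ^ d) = ∑ e ∈ E, (X : ℤ[X]) ^ e ↔
      ((C.image (Nat.cast : ℕ → ℤ) - C.image (Nat.cast : ℕ → ℤ)) ∩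
          (D.image (Nat.cast : ℕ → ℤ) - D.image (Nat.cast : ℕ → ℤ)) = {0} ∧
        E = C + D) :=
  stmt1_general C D E hC hD
end

section
/- Let D_1, …, D_N be finite subsets of the nonnegative integers with 0 ∈ D_i for every i, and suppose that for each n ∈ {2, …, N} one has (D_n − D_n) ∩ ((D_1 − D_1) + (D_2 − D_2) + ⋯ + (D_{n−1} − D_{n−1})) = {0}. Then P_{D_1} · P_{D_2} ⋯ P_{D_N} = P_{D_1 + D_2 + ⋯ + D_N} in ℤ[X]. -/
/-!
Multiplying out `P_A * P_B` gives `∑_{(a, b) ∈ A × B} X^(a + b)`, which is `P_{A + B}` as soon as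
`(a, b) ↦ a + b` is injective on `A × B`; by cancellation this is the case when
`(B - B) ∩ (A - A) = {0}`. For `A = D₁ + ⋯ + D_{n-1}` the difference set `A - A` lies in
`(D₁ - D₁) + ⋯ + (D_{n-1} - D_{n-1})`, so the hypothesis gives injectivity at every step of an
induction on `N`.
-/

open Polynomial Pointwise Finset

theorem Finset.sum_sub_sum_subset_sum_sub {ι G : Type*} [AddCommGroup G] [DecidableEq G]
    (t : Finset ι) (T : ι → Finset G) :
    (∑ i ∈ t, T i) - (∑ i ∈ t, T i) ⊆ ∑ i ∈ t, (T i - T i) := by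
  classical
  induction t using Finset.induction with
  | empty => simp
  | insert j s hj ih =>
    rw [sum_insert hj, sum_insert hj]
    intro z hz
    simp only [mem_sub, mem_add] at hz
    obtain ⟨_, ⟨a, ha, u, hu, rfl⟩, _, ⟨a', ha', u', hu', rfl⟩, rfl⟩ := hz
    exact mem_add.2 ⟨a - a', sub_mem_sub ha ha', u - u', ih (sub_mem_sub hu hu'), by abel⟩

theorem sum_pow_mul_sum_pow_of_injOn {R : Type*} [Semiring R] (x : R) {A B : Finset ℕ}
    (h : Set.InjOn (fun p : ℕ × ℕ => p.1 + p.2) ↑(A ×ˢ B)) :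
    (∑ a ∈ A, x ^ a) * ∑ b ∈ B, x ^ b = ∑ c ∈ A + B, x ^ c := by
  rw [← image_add_product, sum_image h, sum_product, sum_mul_sum]
  simp only [pow_add]

theorem injOn_add_of_sub_inter_sub_subset_zero {A B : Finset ℕ}
    (h : ((B.image (Nat.cast : ℕ → ℤ) - B.image Nat.cast) ∩
      (A.image (Nat.cast : ℕ → ℤ) - A.image Nat.cast)) ⊆ {0}) :
    Set.InjOn (fun p : ℕ × ℕ => p.1 + p.2) ↑(A ×ˢ B) := by
  rintro ⟨a, b⟩ hab ⟨a', b'⟩ hab' (hsum : a + b = a' + b')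
  obtain ⟨ha, hb⟩ := mem_product.1 hab
  obtain ⟨ha', hb'⟩ := mem_product.1 hab'
  have hdiff : (b : ℤ) - b' = a' - a := by omega
  have hzero : (b : ℤ) - b' ∈ ({0} : Finset ℤ) := h <| mem_inter.2
    ⟨sub_mem_sub (mem_image_of_mem _ hb) (mem_image_of_mem _ hb'),
      hdiff ▸ sub_mem_sub (mem_image_of_mem _ ha') (mem_image_of_mem _ ha)⟩
  rw [mem_singleton] at hzero
  simp only [Prod.mk.injEq]
  omega

theorem stmt2_general (N : ℕ) (D : ℕ → Finset ℕ)
    (hind : ∀ n ∈ Finset.Icc 2 N,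
      ((D n).image (Nat.cast : ℕ → ℤ) - (D n).image (Nat.cast : ℕ → ℤ)) ∩
        (∑ i ∈ Finset.Icc 1 (n - 1),
          ((D i).image (Nat.cast : ℕ → ℤ) - (D i).image (Nat.cast : ℕ → ℤ))) = {0}) :
    ∏ i ∈ Finset.Icc 1 N, (∑ c ∈ D i, (X : ℤ[X]) ^ c) =
      ∑ c ∈ (∑ i ∈ Finset.Icc 1 N, D i), (X : ℤ[X]) ^ c := by
  induction N with
  | zero => simp [show (0 : Finset ℕ) = {0} from rfl]
  | succ n ih =>
    rw [prod_Icc_succ_top (by omega), sum_Icc_succ_top (by omega),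
      ih fun m hm => hind m (Icc_subset_Icc_right (by omega) hm)]
    refine sum_pow_mul_sum_pow_of_injOn X (injOn_add_of_sub_inter_sub_subset_zero ?_)
    have hsep : ((D (n + 1)).image (Nat.cast : ℕ → ℤ) - (D (n + 1)).image Nat.cast) ∩
        ∑ i ∈ Icc 1 n, ((D i).image (Nat.cast : ℕ → ℤ) - (D i).image Nat.cast) ⊆ {0} := by
      rcases n.eq_zero_or_pos with rfl | hn
      · rw [Icc_eq_empty_of_lt zero_lt_one, sum_empty]
        exact inter_subset_right
      · exact (hind (n + 1) (by simp only [mem_Icc]; omega)).le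
    have himage : (∑ i ∈ Icc 1 n, D i).image (Nat.cast : ℕ → ℤ) =
        ∑ i ∈ Icc 1 n, (D i).image Nat.cast :=
      map_sum (imageAddMonoidHom (Nat.castAddMonoidHom ℤ)) _ _
    rw [himage]
    exact (inter_subset_inter_left (sum_sub_sum_subset_sum_sub _ _)).trans hsep

theorem stmt2 (N : ℕ) (D : ℕ → Finset ℕ)
    (h0 : ∀ i ∈ Finset.Icc 1 N, 0 ∈ D i)
    (hind : ∀ n ∈ Finset.Icc 2 N,
      ((D n).image (Nat.cast : ℕ → ℤ) - (D n).image (Nat.cast : ℕ → ℤ)) ∩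
        (∑ i ∈ Finset.Icc 1 (n - 1),
          ((D i).image (Nat.cast : ℕ → ℤ) - (D i).image (Nat.cast : ℕ → ℤ))) = {0}) :
    ∏ i ∈ Finset.Icc 1 N, (∑ c ∈ D i, (X : ℤ[X]) ^ c) =
      ∑ c ∈ (∑ i ∈ Finset.Icc 1 N, D i), (X : ℤ[X]) ^ c :=
  stmt2_general N D hind
end

section
/- Let G be a linearly ordered abelian group (written additively) and let A, B, C be finite subsets of {g ∈ G : g ≥ 0} with 0 ∈ A. Assume that the translates A + b (b ∈ B) are pairwise disjoint, the translates A + c (c ∈ C) are pairwise disjoint, (A − A) ∩ (B − B) = {0}, and ⋃_{b∈B}(A + b) = ⋃_{c∈C}(A + c). Then B = C. -/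
/-!
The least element of `⋃_{b∈B} (A + b)` is `min B`, because `0 ∈ A` and `A ≥ 0`. Hence equal unions
force `min B = min C`; removing the common translate `A + min B` keeps the unions equal by
disjointness, and induction on `B` finishes.
-/

open Pointwise

theorem Finset.biUnion_erase_of_pairwiseDisjoint {ι α : Type*} [DecidableEq ι] [DecidableEq α]
    {s : Finset ι} {f : ι → Finset α} (hs : (s : Set ι).PairwiseDisjoint f) {i : ι} (hi : i ∈ s) :
    (s.erase i).biUnion f = s.biUnion f \ f i := by
  ext x
  simp only [Finset.mem_biUnion, Finset.mem_sdiff, Finset.mem_erase]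
  constructor
  · rintro ⟨j, ⟨hji, hj⟩, hx⟩
    exact ⟨⟨j, hj, hx⟩, Finset.disjoint_left.mp (hs hj hi hji) hx⟩
  · rintro ⟨⟨j, hj, hx⟩, hxi⟩
    exact ⟨j, ⟨fun hji => hxi (hji ▸ hx), hj⟩, hx⟩

theorem self_mem_biUnion_image_add {M : Type*} [AddZeroClass M] [DecidableEq M] {A B : Finset M}
    (hA0 : (0 : M) ∈ A) {b : M} (hb : b ∈ B) :
    b ∈ B.biUnion (fun b => A.image (· + b)) :=
  Finset.mem_biUnion.mpr ⟨b, hb, Finset.mem_image.mpr ⟨0, hA0, zero_add b⟩⟩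

section Translates

variable {G : Type*} [AddCommMonoid G] [LinearOrder G] [IsOrderedAddMonoid G] [DecidableEq G]
  {A B C : Finset G}

theorem isLeast_biUnion_image_add (hA0 : (0 : G) ∈ A) (hApos : ∀ a ∈ A, 0 ≤ a) {m : G}
    (hm : IsLeast (B : Set G) m) :
    IsLeast (B.biUnion (fun b => A.image (· + b)) : Set G) m := by
  refine ⟨self_mem_biUnion_image_add hA0 hm.1, fun x hx => ?_⟩
  obtain ⟨b, hb, hxb⟩ := Finset.mem_biUnion.mp hx
  obtain ⟨a, ha, rfl⟩ := Finset.mem_image.mp hxb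
  exact (hm.2 hb).trans (le_add_of_nonneg_left (hApos a ha))

theorem mem_of_isLeast_biUnion_image_add (hA0 : (0 : G) ∈ A) (hApos : ∀ a ∈ A, 0 ≤ a) {m : G}
    (hm : IsLeast (C.biUnion (fun c => A.image (· + c)) : Set G) m) : m ∈ C := by
  obtain ⟨c, hc, hmAc⟩ := Finset.mem_biUnion.mp hm.1
  obtain ⟨a, ha, hac⟩ := Finset.mem_image.mp hmAc
  have hmc : m ≤ c := hm.2 (self_mem_biUnion_image_add hA0 hc)
  have hcm : c ≤ m := hac ▸ le_add_of_nonneg_left (hApos a ha)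
  exact le_antisymm hmc hcm ▸ hc

theorem min'_mem_of_biUnion_image_add_eq (hA0 : (0 : G) ∈ A) (hApos : ∀ a ∈ A, 0 ≤ a)
    (hB : B.Nonempty)
    (hunion : B.biUnion (fun b => A.image (· + b)) = C.biUnion (fun c => A.image (· + c))) :
    B.min' hB ∈ C := by
  have hleast := isLeast_biUnion_image_add hA0 hApos (B.isLeast_min' hB)
  rw [hunion] at hleast
  exact mem_of_isLeast_biUnion_image_add hA0 hApos hleast

theorem eq_of_biUnion_image_add_eq (hA0 : (0 : G) ∈ A) (hApos : ∀ a ∈ A, 0 ≤ a)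
    (hB : (B : Set G).PairwiseDisjoint (fun b => A.image (· + b)))
    (hC : (C : Set G).PairwiseDisjoint (fun c => A.image (· + c)))
    (hunion : B.biUnion (fun b => A.image (· + b)) = C.biUnion (fun c => A.image (· + c))) :
    B = C := by
  induction B using Finset.strongInduction generalizing C with
  | H B ih =>
    rcases B.eq_empty_or_nonempty with rfl | hBne
    · rcases C.eq_empty_or_nonempty with rfl | hCne
      · rfl
      · simpa using min'_mem_of_biUnion_image_add_eq hA0 hApos hCne hunion.symm
    · set m := B.min' hBne
      have hmB : m ∈ B := B.min'_mem hBne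
      have hmC : m ∈ C := min'_mem_of_biUnion_image_add_eq hA0 hApos hBne hunion
      have herase : B.erase m = C.erase m :=
        ih _ (Finset.erase_ssubset hmB) (hB.subset (by simp)) (hC.subset (by simp)) (by
          rw [Finset.biUnion_erase_of_pairwiseDisjoint hB hmB,
            Finset.biUnion_erase_of_pairwiseDisjoint hC hmC, hunion])
      rw [← Finset.insert_erase hmB, ← Finset.insert_erase hmC, herase]

end Translates

theorem stmt3_general {G : Type*} [AddCommGroup G] [LinearOrder G] [IsOrderedAddMonoid G] [DecidableEq G]
    (A B C : Finset G)
    (hA0 : (0 : G) ∈ A)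
    (hApos : ∀ a ∈ A, 0 ≤ a)
    (hBdisj : ∀ b ∈ B, ∀ b' ∈ B, b ≠ b' →
      Disjoint (A.image (· + b)) (A.image (· + b')))
    (hCdisj : ∀ c ∈ C, ∀ c' ∈ C, c ≠ c' →
      Disjoint (A.image (· + c)) (A.image (· + c')))
    (hunion : B.biUnion (fun b => A.image (· + b)) =
      C.biUnion (fun c => A.image (· + c))) :
    B = C :=
  eq_of_biUnion_image_add_eq hA0 hApos (fun b hb b' hb' => hBdisj b hb b' hb')
    (fun c hc c' hc' => hCdisj c hc c' hc') hunion

theorem stmt3 {G : Type*} [AddCommGroup G] [LinearOrder G] [IsOrderedAddMonoid G] [DecidableEq G]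
    (A B C : Finset G)
    (hA0 : (0 : G) ∈ A)
    (hApos : ∀ a ∈ A, 0 ≤ a) (hBpos : ∀ b ∈ B, 0 ≤ b) (hCpos : ∀ c ∈ C, 0 ≤ c)
    (hBdisj : ∀ b ∈ B, ∀ b' ∈ B, b ≠ b' →
      Disjoint (A.image (· + b)) (A.image (· + b')))
    (hCdisj : ∀ c ∈ C, ∀ c' ∈ C, c ≠ c' →
      Disjoint (A.image (· + c)) (A.image (· + c')))
    (hAB : (A - A) ∩ (B - B) = {0})
    (hunion : B.biUnion (fun b => A.image (· + b)) =
      C.biUnion (fun c => A.image (· + c))) :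
    B = C :=
  stmt3_general A B C hA0 hApos hBdisj hCdisj hunion
end

section
/- Let (C_n)_{n≥1}, (F_n)_{n≥0} and (C'_n)_{n≥1}, (F'_n)_{n≥0} be two pairs of sequences of finite subsets of ℤ, each pair satisfying conditions (I)–(III) and (1-3), and assume C_n ⊆ ℕ and C'_n ⊆ ℕ for all n ≥ 1. Write Σ_{i>k}C_i := ⋃_{m>k}(C_{k+1} + C_{k+2} + ⋯ + C_m), and similarly for the primed sequence. Suppose there exist an integer r > 0 and a subset R ⊆ F'_r ∩ ℕ such that Σ_{i>0}C_i = R + Σ_{i>r}C'_i. Then there exist an increasing sequence of integers 0 = l_0 < l'_1 < l_1 < l'_2 < l_2 < ⋯ and finite subsets A_n ⊆ F'_{l'_n} ∩ ℕ and B_n ⊆ F_{l_n} ∩ ℕ with 0 ∈ A_n ∩ B_n such that, for every n ≥ 1: Σ_{i>l_{n−1}}C_i = A_n + Σ_{i>l'_n}C'_i; Σ_{i>l'_n}C'_i = B_n + Σ_{i>l_n}C_i; F'_{l'_n} + B_n ⊆ F_{l_n}; F_{l_n} + A_{n+1} ⊆ F'_{l'_{n+1}}; (F'_{l'_n} − F'_{l'_n})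 ∩ (B_n − B_n) = {0}; and (F_{l_n} − F_{l_n}) ∩ (A_{n+1} − A_{n+1}) = {0}. -/
/-!
By (III), every element of `F k + Σ_{i>k} C_i` decomposes uniquely. Given
`Σ_{i>k} C_i = A + Σ_{i>k'} C'_i`, use (1-3) to choose `m > k'` with
`F'_{k'} + C_{k+1} + ⋯ + C_m ⊆ F_m`, and let `B` be the set of elements of
`C_{k+1} + ⋯ + C_m` lying in `Σ_{i>k'} C'_i`. Then `Σ_{i>k'} C'_i = B + Σ_{i>m} C_i`:
for `σ ∈ C_{k+1} + ⋯ + C_m` and `t ∈ Σ_{i>m} C_i` one has `σ + t ∈ Σ_{i>k'} C'_i` iff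
`σ ∈ Σ_{i>k'} C'_i`, by strong induction on `σ ≥ 0`, comparing the unique decompositions of
`σ + t` in `A + Σ_{i>k'} C'_i` and in `F_m + Σ_{i>m} C_i`. The same step with the two
sequences exchanged, iterated, produces `l`, `l'`, `A` and `B`.
-/

open Pointwise

/-- `tailSum C k` is the set Σ_{i>k} C_i = ⋃_{m>k} (C_{k+1} + ⋯ + C_m) ⊆ ℤ. -/
def tailSum (C : ℕ → Finset ℤ) (k : ℕ) : Set ℤ :=
  ⋃ m ∈ Set.Ioi k, ((∑ i ∈ Finset.Icc (k + 1) m, C i : Finset ℤ) : Set ℤ)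

open Finset

def blockSum (C : ℕ → Finset ℤ) (k m : ℕ) : Finset ℤ :=
  ∑ i ∈ Icc (k + 1) m, C i

section BlockSum

variable {C F : ℕ → Finset ℤ} {k m M : ℕ}

theorem mem_tailSum {x : ℤ} : x ∈ tailSum C k ↔ ∃ m, k < m ∧ x ∈ blockSum C k m := by
  simp only [tailSum, blockSum, Set.mem_iUnion, Set.mem_Ioi, mem_coe, exists_prop]

theorem blockSum_self : blockSum C k k = 0 := by
  simp [blockSum]

theorem blockSum_add_blockSum (hkm : k ≤ m) (hmM : m ≤ M) :
    blockSum C k m + blockSum C m M = blockSum C k M := by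
  simp only [blockSum, Icc_add_one_left_eq_Ioc]
  exact sum_Ioc_consecutive C hkm hmM

theorem blockSum_succ (hkm : k ≤ m) : blockSum C k (m + 1) = blockSum C k m + C (m + 1) := by
  simp only [blockSum, Icc_add_one_left_eq_Ioc]
  exact sum_Ioc_succ_top hkm C

theorem blockSum_induction (p : Finset ℤ → Prop) (hadd : ∀ s t, p s → p t → p (s + t))
    (hzero : p 0) (hC : ∀ n, p (C (n + 1))) : p (blockSum C k m) :=
  sum_induction _ p hadd hzero fun i hi => by
    obtain ⟨n, rfl⟩ := Nat.exists_eq_add_one.2 (Nat.lt_of_lt_of_le k.succ_pos (mem_Icc.1 hi).1)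
    exact hC n

theorem zero_mem_blockSum (hC : ∀ n, (0 : ℤ) ∈ C (n + 1)) : (0 : ℤ) ∈ blockSum C k m :=
  blockSum_induction (fun s => (0 : ℤ) ∈ s) (fun _ _ hs ht => by simpa using add_mem_add hs ht)
    zero_mem_zero hC

theorem nonneg_of_mem_blockSum (hC : ∀ n, ∀ c ∈ C (n + 1), 0 ≤ c) :
    ∀ x ∈ blockSum C k m, 0 ≤ x :=
  blockSum_induction (fun s => ∀ x ∈ s, (0 : ℤ) ≤ x)
    (fun _ _ hs ht x hx => by
      obtain ⟨a, ha, b, hb, rfl⟩ := mem_add.1 hx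
      exact add_nonneg (hs a ha) (ht b hb))
    (by simp) hC

theorem blockSum_subset_blockSum (hC : ∀ n, (0 : ℤ) ∈ C (n + 1)) (hkm : k ≤ m) (hmM : m ≤ M) :
    blockSum C k m ⊆ blockSum C k M := fun x hx => by
  simpa [← blockSum_add_blockSum hkm hmM] using add_mem_add hx (zero_mem_blockSum hC)

theorem tailSum_eq_blockSum_add_tailSum (hC : ∀ n, (0 : ℤ) ∈ C (n + 1)) (hkm : k ≤ m) :
    tailSum C k = blockSum C k m + tailSum C m := by
  ext x
  simp only [Set.mem_add, mem_coe, mem_tailSum]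
  constructor
  · rintro ⟨M, hkM, hx⟩
    rcases le_or_gt M m with hMm | hmM
    · exact ⟨x, blockSum_subset_blockSum hC hkM.le hMm hx, 0,
        ⟨m + 1, m.lt_succ_self, zero_mem_blockSum hC⟩, add_zero x⟩
    · rw [← blockSum_add_blockSum hkm hmM.le] at hx
      obtain ⟨s, hs, t, ht, rfl⟩ := mem_add.1 hx
      exact ⟨s, hs, t, ⟨M, hmM, ht⟩, rfl⟩
  · rintro ⟨s, hs, t, ⟨M, hmM, ht⟩, rfl⟩
    exact ⟨M, hkm.trans_lt hmM, blockSum_add_blockSum hkm hmM.le ▸ add_mem_add hs ht⟩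

theorem zero_mem_tailSum (hC : ∀ n, (0 : ℤ) ∈ C (n + 1)) : (0 : ℤ) ∈ tailSum C k :=
  mem_tailSum.2 ⟨k + 1, k.lt_succ_self, zero_mem_blockSum hC⟩

theorem nonneg_of_mem_tailSum (hC : ∀ n, ∀ c ∈ C (n + 1), 0 ≤ c) :
    ∀ x ∈ tailSum C k, 0 ≤ x := fun _ hx =>
  let ⟨_, _, hx⟩ := mem_tailSum.1 hx
  nonneg_of_mem_blockSum hC _ hx

theorem add_blockSum_subset (hF : ∀ n, F n + C (n + 1) ⊆ F (n + 1)) (hkm : k ≤ m) :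
    F k + blockSum C k m ⊆ F m := by
  induction m, hkm using Nat.le_induction with
  | base => simp [blockSum_self]
  | succ m hkm ih =>
    rw [blockSum_succ hkm, ← add_assoc]
    exact (add_subset_add_right ih).trans (hF m)

end BlockSum

section DirectSum

variable {α : Type*}

def IsDirectSum [Add α] (P Q : Set α) : Prop :=
  ∀ ⦃p p' q q'⦄, p ∈ P → p' ∈ P → q ∈ Q → q' ∈ Q → p + q = p' + q' → p = p'

theorem IsDirectSum.mono [Add α] {P Q P' Q' : Set α} (h : IsDirectSum P Q) (hP : P' ⊆ P)
    (hQ : Q' ⊆ Q) : IsDirectSum P' Q' := fun _ _ _ _ hp hp' hq hq' =>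
  h (hP hp) (hP hp') (hQ hq) (hQ hq')

theorem IsDirectSum.add_right [AddCancelCommMonoid α] {P Q Φ R : Set α} (hPQ : IsDirectSum P Q)
    (hΦR : IsDirectSum Φ R) (hsub : P + Q ⊆ Φ) : IsDirectSum P (Q + R) := by
  rintro p p' _ _ hp hp' ⟨q, hq, r, hr, rfl⟩ ⟨q', hq', r', hr', rfl⟩ h
  have hΦ : p + q = p' + q' :=
    hΦR (hsub ⟨p, hp, q, hq, rfl⟩) (hsub ⟨p', hp', q', hq', rfl⟩) hr hr' (by
      simpa only [add_assoc] using h)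
  exact hPQ hp hp' hq hq' hΦ

theorem IsDirectSum.sub_inter_sub_eq_zero [AddCommGroup α] [DecidableEq α] {P Q : Finset α}
    (h : IsDirectSum (P : Set α) Q) (hP : (0 : α) ∈ P) (hQ : (0 : α) ∈ Q) :
    (P - P) ∩ (Q - Q) = {0} := by
  ext d
  simp only [mem_inter, mem_sub, mem_singleton]
  constructor
  · rintro ⟨⟨p, hp, p', hp', rfl⟩, q, hq, q', hq', hd⟩
    have := h (mem_coe.2 hp) (mem_coe.2 hp') (mem_coe.2 hq') (mem_coe.2 hq) (by
      rw [← sub_eq_zero, show p + q' - (p' + q) = p - p' - (q - q') by abel, hd, sub_self])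
    rw [this, sub_self]
  · rintro rfl
    exact ⟨⟨0, hP, 0, hP, sub_zero 0⟩, 0, hQ, 0, hQ, sub_zero 0⟩

end DirectSum

section DecompositionSwap

variable {A S Y T : Set ℤ}

theorem exists_add_of_add_eq_add (hAST : IsDirectSum (A + S) T) (hA0 : 0 ∈ A)
    (h : A + Y = S + T) {σ t : ℤ} (hσ : σ ∈ S) (ht : t ∈ T) :
    ∃ a ∈ A, ∃ σ' ∈ S, σ = a + σ' ∧ σ' + t ∈ Y := by
  obtain ⟨a, ha, y, hy, hay⟩ : σ + t ∈ A + Y := h ▸ Set.add_mem_add hσ ht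
  obtain ⟨σ', hσ', t', ht', rfl⟩ : y ∈ S + T := h ▸ ⟨0, hA0, y, hy, zero_add y⟩
  have hσ : a + σ' = σ := hAST (Set.add_mem_add ha hσ') ⟨0, hA0, σ, hσ, zero_add σ⟩ ht' ht
    (by linarith)
  exact ⟨a, ha, σ', hσ', hσ.symm, by rwa [show t = t' by linarith]⟩

theorem add_mem_iff_mem_of_add_eq_add (hAY : IsDirectSum A Y) (hAST : IsDirectSum (A + S) T)
    (hA0 : 0 ∈ A) (hT0 : 0 ∈ T) (hA : ∀ a ∈ A, 0 ≤ a) (hY : ∀ y ∈ Y, 0 ≤ y)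
    (h : A + Y = S + T) {σ t : ℤ} (hσ : σ ∈ S) (ht : t ∈ T) : σ + t ∈ Y ↔ σ ∈ Y := by
  have hS : ∀ σ ∈ S, 0 ≤ σ := fun σ hσ => by
    obtain ⟨a, ha, y, hy, hay⟩ : σ ∈ A + Y := h ▸ ⟨σ, hσ, 0, hT0, add_zero σ⟩
    linarith [hA a ha, hY y hy]
  have hzero {a y y'} (ha : a ∈ A) (hy : y ∈ Y) (hy' : y' ∈ Y) (he : a + y = y') : a = 0 :=
    hAY ha hA0 hy hy' (by rw [he, zero_add])
  induction hn : σ.toNat using Nat.strong_induction_on generalizing σ with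
  | _ n ih =>
  subst hn
  obtain ⟨a, ha, σ', hσ', rfl, hσ't⟩ := exists_add_of_add_eq_add hAST hA0 h hσ ht
  obtain ⟨a₀, ha₀, σ₀, hσ₀, hσ, hσ₀Y⟩ := exists_add_of_add_eq_add hAST hA0 h hσ hT0
  rw [add_zero] at hσ₀Y
  -- `σ + t ∈ Y ↔ a = 0` and `σ ∈ Y ↔ a₀ = 0`; a nonzero component leaves a smaller
  -- remainder `σ'` or `σ₀`, to which the induction hypothesis applies.
  have hlt {b τ} (hb : b ∈ A) (hτ : τ ∈ S) (hne : b ≠ 0) (he : a + σ' = b + τ) :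
      τ.toNat < (a + σ').toNat := by
    have := hA b hb; have := hS τ hτ; omega
  constructor
  · intro hY'
    by_cases h0 : a₀ = 0
    · rwa [hσ, h0, zero_add]
    · have := (ih _ (hlt ha₀ hσ₀ h0 hσ) hσ₀ rfl).2 hσ₀Y
      exact absurd (hzero ha₀ this hY' (by rw [hσ, add_assoc])) h0
  · intro hY'
    by_cases h0 : a = 0
    · rwa [h0, zero_add] at hY' ⊢
    · have := (ih _ (hlt ha hσ' h0 rfl) hσ' rfl).1 hσ't
      exact absurd (hzero ha this hY' rfl) h0

theorem eq_inter_add_of_add_eq_add (hAY : IsDirectSum A Y) (hAST : IsDirectSum (A + S) T)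
    (hA0 : 0 ∈ A) (hT0 : 0 ∈ T) (hA : ∀ a ∈ A, 0 ≤ a) (hY : ∀ y ∈ Y, 0 ≤ y)
    (h : A + Y = S + T) : Y = S ∩ Y + T := by
  ext y
  constructor
  · intro hy
    obtain ⟨σ, hσ, t, ht, rfl⟩ : y ∈ S + T := h ▸ ⟨0, hA0, y, hy, zero_add y⟩
    exact ⟨σ, ⟨hσ, (add_mem_iff_mem_of_add_eq_add hAY hAST hA0 hT0 hA hY h hσ ht).1 hy⟩,
      t, ht, rfl⟩
  · rintro ⟨σ, ⟨hσ, hσY⟩, t, ht, rfl⟩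
    exact (add_mem_iff_mem_of_add_eq_add hAY hAST hA0 hT0 hA hY h hσ ht).2 hσY

end DecompositionSwap

/-- `(C, F)` satisfies (I)–(III) (without `1 < #C n`), (1-3) and `C n ⊆ ℕ`. -/
structure IsCFConstruction (C F : ℕ → Finset ℤ) : Prop where
  zero_mem_F_zero : (0 : ℤ) ∈ F 0
  zero_mem_C : ∀ n, (0 : ℤ) ∈ C (n + 1)
  add_subset : ∀ n, F n + C (n + 1) ⊆ F (n + 1)
  disjoint_image : ∀ n, ∀ c ∈ C (n + 1), ∀ c' ∈ C (n + 1), c ≠ c' →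
    Disjoint ((F n).image (· + c)) ((F n).image (· + c'))
  exists_add_subset : ∀ g : ℤ, ∀ n : ℕ, ∃ m, n < m ∧
    ({g} : Finset ℤ) + F n + ∑ i ∈ Icc (n + 1) m, C i ⊆ F m
  nonneg : ∀ n, ∀ c ∈ C (n + 1), 0 ≤ c

namespace IsCFConstruction

variable {C F : ℕ → Finset ℤ}

theorem zero_mem_F (hs : IsCFConstruction C F) (n : ℕ) : (0 : ℤ) ∈ F n :=
  add_blockSum_subset hs.add_subset n.zero_le <| by
    simpa using add_mem_add hs.zero_mem_F_zero (zero_mem_blockSum (k := 0) (m := n) hs.zero_mem_C)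

theorem blockSum_subset_F (hs : IsCFConstruction C F) {k m : ℕ} (hkm : k ≤ m) :
    blockSum C k m ⊆ F m := fun x hx =>
  add_blockSum_subset hs.add_subset hkm <| by simpa using add_mem_add (hs.zero_mem_F k) hx

theorem isDirectSum_F_C (hs : IsCFConstruction C F) (n : ℕ) :
    IsDirectSum (F n : Set ℤ) (C (n + 1)) := by
  intro p p' c c' hp hp' hc hc' h
  obtain rfl : c = c' := by
    by_contra hne
    exact disjoint_left.1 (hs.disjoint_image n c hc c' hc' hne) (mem_image_of_mem _ hp)
      (mem_image.2 ⟨p', hp', h.symm⟩)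
  exact add_right_cancel h

theorem isDirectSum_blockSum (hs : IsCFConstruction C F) {k M : ℕ} (hkM : k ≤ M) :
    IsDirectSum (F k : Set ℤ) (blockSum C k M) := by
  induction M, hkM using Nat.le_induction with
  | base =>
    intro p p' q q' _ _ hq hq' h
    simp only [blockSum_self, coe_zero, Set.mem_zero] at hq hq'
    simpa [hq, hq'] using h
  | succ M hkM ih =>
    rw [blockSum_succ hkM, coe_add]
    exact ih.add_right (hs.isDirectSum_F_C M) (by
      exact_mod_cast add_blockSum_subset hs.add_subset hkM)

theorem isDirectSum_tailSum (hs : IsCFConstruction C F) (k : ℕ) :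
    IsDirectSum (F k : Set ℤ) (tailSum C k) := by
  intro p p' q q' hp hp' hq hq' h
  obtain ⟨M, hkM, hqM⟩ := mem_tailSum.1 hq
  obtain ⟨M', hkM', hqM'⟩ := mem_tailSum.1 hq'
  exact hs.isDirectSum_blockSum (hkM.le.trans (le_max_left M M')) hp hp'
    (blockSum_subset_blockSum hs.zero_mem_C hkM.le (le_max_left M M') hqM)
    (blockSum_subset_blockSum hs.zero_mem_C hkM'.le (le_max_right M M') hqM') h

theorem eventually_add_blockSum_subset (hs : IsCFConstruction C F) (G : Finset ℤ) (n : ℕ) :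
    ∀ᶠ m in Filter.atTop, G + blockSum C n m ⊆ F m := by
  suffices ∀ g, ∀ᶠ m in Filter.atTop, ∀ s ∈ blockSum C n m, g + s ∈ F m by
    filter_upwards [(Filter.eventually_all_finset G).2 fun g _ => this g] with m hm
    exact add_subset_iff.2 hm
  intro g
  obtain ⟨m₀, hnm₀, hm₀⟩ := hs.exists_add_subset g n
  filter_upwards [Filter.eventually_ge_atTop m₀] with m hm s hs'
  rw [← blockSum_add_blockSum hnm₀.le hm] at hs'
  obtain ⟨s₀, hs₀, s₁, hs₁, rfl⟩ := mem_add.1 hs'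
  have : g + s₀ ∈ F m₀ := hm₀ <| by
    simpa [blockSum] using add_mem_add (add_mem_add (mem_singleton_self g) (hs.zero_mem_F n)) hs₀
  simpa [add_assoc] using add_blockSum_subset hs.add_subset hm (add_mem_add this hs₁)

end IsCFConstruction

structure IsTailTransfer (C C' F' : ℕ → Finset ℤ) (k : ℕ) (A : Finset ℤ) (k' : ℕ) : Prop where
  lt : k < k'
  subset : A ⊆ F' k'
  nonneg : ∀ x ∈ A, 0 ≤ x
  zero_mem : (0 : ℤ) ∈ A
  tailSum_eq : tailSum C k = A + tailSum C' k'

namespace IsTailTransfer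

variable {C F C' F' : ℕ → Finset ℤ} {k k' : ℕ} {A : Finset ℤ}

theorem swap (hs : IsCFConstruction C F) (hs' : IsCFConstruction C' F')
    (h : IsTailTransfer C C' F' k A k') :
    ∃ m B, IsTailTransfer C' C F k' B m ∧ F' k' + B ⊆ F m ∧
      (F' k' - F' k') ∩ (B - B) = {0} := by
  classical
  obtain ⟨m, hk'm, habs⟩ :=
    ((Filter.eventually_gt_atTop k').and (hs.eventually_add_blockSum_subset (F' k') k)).exists
  have hkm : k ≤ m := (h.lt.trans hk'm).le
  set Y := tailSum C' k'
  set S := blockSum C k m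
  set B := S.filter (· ∈ Y)
  have hY : Y = ↑B + tailSum C m := by
    rw [coe_filter]
    refine eq_inter_add_of_add_eq_add ((hs'.isDirectSum_tailSum k').mono h.subset le_rfl)
      ((hs.isDirectSum_tailSum m).mono ?_ le_rfl) h.zero_mem (zero_mem_tailSum hs.zero_mem_C)
      h.nonneg (nonneg_of_mem_tailSum hs'.nonneg) ?_
    · exact_mod_cast (add_subset_add_right h.subset).trans habs
    · rw [← h.tailSum_eq, tailSum_eq_blockSum_add_tailSum hs.zero_mem_C hkm]
  have hBS : B ⊆ S := filter_subset _ _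
  have hBY : (B : Set ℤ) ⊆ Y := fun x hx => (mem_filter.1 hx).2
  refine ⟨m, B, ⟨hk'm, hBS.trans (hs.blockSum_subset_F hkm),
    fun x hx => nonneg_of_mem_blockSum hs.nonneg x (hBS hx),
    mem_filter.2 ⟨zero_mem_blockSum hs.zero_mem_C, zero_mem_tailSum hs'.zero_mem_C⟩, hY⟩,
    (add_subset_add_left hBS).trans habs, ?_⟩
  exact ((hs'.isDirectSum_tailSum k').mono le_rfl hBY).sub_inter_sub_eq_zero (hs'.zero_mem_F k')
    (mem_filter.2 ⟨zero_mem_blockSum hs.zero_mem_C, zero_mem_tailSum hs'.zero_mem_C⟩)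

theorem exists_next (hs : IsCFConstruction C F) (hs' : IsCFConstruction C' F')
    (h : IsTailTransfer C C' F' k A k') :
    ∃ x : ℕ × Finset ℤ × ℕ, IsTailTransfer C C' F' x.1 x.2.1 x.2.2 ∧
      ∃ B, IsTailTransfer C' C F k' B x.1 ∧ F' k' + B ⊆ F x.1 ∧
        (F' k' - F' k') ∩ (B - B) = {0} ∧ F x.1 + x.2.1 ⊆ F' x.2.2 ∧
        (F x.1 - F x.1) ∩ (x.2.1 - x.2.1) = {0} := by
  obtain ⟨m, B, hB, hB₁, hB₂⟩ := h.swap hs hs'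
  obtain ⟨m', A', hA', hA₁, hA₂⟩ := hB.swap hs' hs
  exact ⟨(m, A', m'), hA', B, hB, hB₁, hB₂, hA₁, hA₂⟩

end IsTailTransfer

theorem exists_seq_of_forall_exists {α : Type*} {P : α → Prop} {Q : α → α → Prop} {a : α}
    (ha : P a) (h : ∀ x, P x → ∃ y, P y ∧ Q x y) :
    ∃ f : ℕ → α, f 0 = a ∧ ∀ n, P (f n) ∧ Q (f n) (f (n + 1)) := by
  choose g hgP hgQ using h
  let f : ℕ → {x // P x} := fun n => Nat.rec ⟨a, ha⟩ (fun _ x => ⟨g x x.2, hgP x x.2⟩) n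
  exact ⟨fun n => (f n).1, rfl, fun n => ⟨(f n).2, hgQ _ (f n).2⟩⟩

theorem stmt4 (C F C' F' : ℕ → Finset ℤ)
    (hI : (0 : ℤ) ∈ F 0 ∧ ∀ n, (0 : ℤ) ∈ C (n + 1) ∧ 1 < (C (n + 1)).card)
    (hII : ∀ n, F n + C (n + 1) ⊆ F (n + 1))
    (hIII : ∀ n, ∀ c ∈ C (n + 1), ∀ c' ∈ C (n + 1), c ≠ c' →
      Disjoint ((F n).image (· + c)) ((F n).image (· + c')))
    (h13 : ∀ g : ℤ, ∀ n : ℕ, ∃ m, n < m ∧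
      ({g} : Finset ℤ) + F n + ∑ i ∈ Finset.Icc (n + 1) m, C i ⊆ F m)
    (hI' : (0 : ℤ) ∈ F' 0 ∧ ∀ n, (0 : ℤ) ∈ C' (n + 1) ∧ 1 < (C' (n + 1)).card)
    (hII' : ∀ n, F' n + C' (n + 1) ⊆ F' (n + 1))
    (hIII' : ∀ n, ∀ c ∈ C' (n + 1), ∀ c' ∈ C' (n + 1), c ≠ c' →
      Disjoint ((F' n).image (· + c)) ((F' n).image (· + c')))
    (h13' : ∀ g : ℤ, ∀ n : ℕ, ∃ m, n < m ∧
      ({g} : Finset ℤ) + F' n + ∑ i ∈ Finset.Icc (n + 1) m, C' i ⊆ F' m)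
    (hCpos : ∀ n, ∀ c ∈ C (n + 1), 0 ≤ c)
    (hCpos' : ∀ n, ∀ c ∈ C' (n + 1), 0 ≤ c)
    (r : ℕ) (hr : 0 < r) (R : Finset ℤ) (hR : R ⊆ F' r) (hRpos : ∀ x ∈ R, 0 ≤ x)
    (hmain : tailSum C 0 = ↑R + tailSum C' r) :
    ∃ (l l' : ℕ → ℕ) (A B : ℕ → Finset ℤ),
      l 0 = 0 ∧
      (∀ n, l n < l' (n + 1) ∧ l' (n + 1) < l (n + 1)) ∧
      (∀ n, A (n + 1) ⊆ F' (l' (n + 1)) ∧ (∀ x ∈ A (n + 1), 0 ≤ x) ∧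
        (0 : ℤ) ∈ A (n + 1)) ∧
      (∀ n, B (n + 1) ⊆ F (l (n + 1)) ∧ (∀ x ∈ B (n + 1), 0 ≤ x) ∧
        (0 : ℤ) ∈ B (n + 1)) ∧
      (∀ n, tailSum C (l n) = ↑(A (n + 1)) + tailSum C' (l' (n + 1))) ∧
      (∀ n, tailSum C' (l' (n + 1)) = ↑(B (n + 1)) + tailSum C (l (n + 1))) ∧
      (∀ n, F' (l' (n + 1)) + B (n + 1) ⊆ F (l (n + 1))) ∧
      (∀ n, F (l (n + 1)) + A (n + 2) ⊆ F' (l' (n + 2))) ∧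
      (∀ n, (F' (l' (n + 1)) - F' (l' (n + 1))) ∩ (B (n + 1) - B (n + 1)) = {0}) ∧
      (∀ n, (F (l (n + 1)) - F (l (n + 1))) ∩ (A (n + 2) - A (n + 2)) = {0}) := by
  have hs : IsCFConstruction C F :=
    ⟨hI.1, fun n => (hI.2 n).1, hII, hIII, h13, hCpos⟩
  have hs' : IsCFConstruction C' F' :=
    ⟨hI'.1, fun n => (hI'.2 n).1, hII', hIII', h13', hCpos'⟩
  have hR0 : (0 : ℤ) ∈ R := by
    obtain ⟨a, ha, y, hy, hay⟩ : (0 : ℤ) ∈ (R : Set ℤ) + tailSum C' r :=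
      hmain ▸ zero_mem_tailSum hs.zero_mem_C
    obtain rfl : a = 0 := by linarith [hRpos a ha, nonneg_of_mem_tailSum hs'.nonneg y hy]
    exact ha
  obtain ⟨f, hf0, hf⟩ := exists_seq_of_forall_exists
    (P := fun x : ℕ × Finset ℤ × ℕ => IsTailTransfer C C' F' x.1 x.2.1 x.2.2)
    (a := (0, R, r)) ⟨hr, hR, hRpos, hR0, hmain⟩ fun _ hx => hx.exists_next hs hs'
  choose B hB using fun n => (hf n).2
  refine ⟨fun n => (f n).1, fun n => (f (n - 1)).2.2, fun n => (f (n - 1)).2.1,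
    fun n => B (n - 1), congrArg Prod.fst hf0, fun n => ⟨(hf n).1.lt, (hB n).1.lt⟩,
    fun n => ⟨(hf n).1.subset, (hf n).1.nonneg, (hf n).1.zero_mem⟩,
    fun n => ⟨(hB n).1.subset, (hB n).1.nonneg, (hB n).1.zero_mem⟩,
    fun n => (hf n).1.tailSum_eq, fun n => (hB n).1.tailSum_eq, fun n => (hB n).2.1,
    fun n => (hB n).2.2.2.1, fun n => (hB n).2.2.1, fun n => (hB n).2.2.2.2⟩
end

section
/- Let G be a countable discrete group, let 𝔽 be the set of all finite subsets of G endowed with the discrete topology, and let (𝓕_n)_{n≥0} be a fixed sequence of finite subsets of G. Then the set 𝔉R_1 of all sequences (C_n, F_{n−1})_{n≥1} ∈ (𝔽 × 𝔽)^ℕ such that (F_n)_{n≥0} is a subsequence of (𝓕_n)_{n≥0} and conditions (I)–(III) and (1-3) hold is a Gδ subset of (𝔽 × 𝔽)^ℕ equipped with the product topology. -/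
open Pointwise

/-- Discrete topology on the set 𝔽 of finite subsets of a type. -/
instance finsetDiscreteTopologicalSpace (α : Type*) : TopologicalSpace (Finset α) := ⊥

instance finsetDiscreteTopology (α : Type*) : DiscreteTopology (Finset α) := ⟨rfl⟩

/-!
Each of the conditions (I)–(III) is a countable conjunction of statements about finitely many
coordinates, which are open because the coordinates are discrete, and (1-3) is a countable
conjunction of countable disjunctions of such statements. The subsequence condition is handled
by a greedy argument: a sequence is a subsequence of `𝓕` as soon as each of its finite prefixes
is one, because choosing the least possible index for the last term of each prefix yields a
single strictly increasing index map.
-/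

open Set

theorem IsGδ.setOf_forall {X ι : Type*} [TopologicalSpace X] [Countable ι]
    {P : ι → X → Prop} (h : ∀ i, IsGδ {x | P i x}) : IsGδ {x | ∀ i, P i x} := by
  rw [ofPred_forall]
  exact IsGδ.iInter h

theorem isOpen_setOf_of_eq_of_le {X : Type*} [TopologicalSpace X] [DiscreteTopology X]
    {P : (ℕ → X) → Prop} (n : ℕ)
    (hP : ∀ S T, (∀ i ≤ n, S i = T i) → P S → P T) : IsOpen {S | P S} := by
  refine isOpen_iff_forall_mem_open.2 fun S hS =>
    ⟨PiNat.cylinder S (n + 1), fun T hT => hP S T (fun i hi => ?_) hS,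
      PiNat.isOpen_cylinder _ S (n + 1), PiNat.self_mem_cylinder S (n + 1)⟩
  exact (hT i (Nat.lt_succ_of_le hi)).symm

theorem exists_strictMono_eq_comp_iff_forall_prefix {α : Type*} (𝓕 F : ℕ → α) :
    (∃ k : ℕ → ℕ, StrictMono k ∧ ∀ n, F n = 𝓕 (k n)) ↔
      ∀ n, ∃ k : ℕ → ℕ, StrictMonoOn k (Iic n) ∧ ∀ i ≤ n, F i = 𝓕 (k i) := by
  classical
  refine ⟨fun ⟨k, hk, hF⟩ n => ⟨k, hk.strictMonoOn _, fun i _ => hF i⟩, fun H => ?_⟩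
  have hlast : ∀ n, ∃ j, ∃ k : ℕ → ℕ, StrictMonoOn k (Iic n) ∧
      (∀ i ≤ n, F i = 𝓕 (k i)) ∧ k n = j := fun n =>
    let ⟨k, hk, hF⟩ := H n
    ⟨k n, k, hk, hF, rfl⟩
  let m n := Nat.find (hlast n)
  have hm : ∀ n, F n = 𝓕 (m n) := fun n => by
    obtain ⟨k, -, hF, hkn⟩ := Nat.find_spec (hlast n)
    exact (hF n le_rfl).trans (congrArg 𝓕 hkn)
  refine ⟨m, strictMono_nat_of_lt_succ fun n => ?_, hm⟩
  obtain ⟨k, hk, hF, hkn⟩ := Nat.find_spec (hlast (n + 1))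
  have hmin : m n ≤ k n := Nat.find_min' (hlast n)
    ⟨k, hk.mono (Iic_subset_Iic.2 n.le_succ), fun i hi => hF i (hi.trans n.le_succ), rfl⟩
  have hstep : k n < k (n + 1) := hk (mem_Iic.2 n.le_succ) (mem_Iic.2 le_rfl) n.lt_succ_self
  exact (hmin.trans_lt hstep).trans_eq hkn

theorem isGδ_setOf_exists_strictMono_eq_comp {X α : Type*} [TopologicalSpace X]
    [DiscreteTopology X] (f : X → α) (𝓕 : ℕ → α) :
    IsGδ {S : ℕ → X | ∃ k : ℕ → ℕ, StrictMono k ∧ ∀ n, f (S n) = 𝓕 (k n)} := by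
  simp only [exists_strictMono_eq_comp_iff_forall_prefix 𝓕]
  refine IsGδ.setOf_forall fun n => (isOpen_setOf_of_eq_of_le n ?_).isGδ
  rintro S T hST ⟨k, hk, hF⟩
  exact ⟨k, hk, fun i hi => hST i hi ▸ hF i hi⟩

theorem isOpen_setOf_exists_singleton_mul_prod_subset {G : Type*} [Monoid G] [DecidableEq G]
    (g : G) (n : ℕ) :
    IsOpen {S : ℕ → Finset G × Finset G | ∃ m, n < m ∧
      ({g} : Finset G) * (S n).2 *
        ((List.range (m - n)).map fun j => (S (n + j)).1).prod ⊆ (S m).2} := by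
  simp only [ofPred_exists]
  refine isOpen_iUnion fun m => isOpen_setOf_of_eq_of_le m ?_
  rintro S T hST ⟨hnm, hsub⟩
  have hprod : ((List.range (m - n)).map fun j => (T (n + j)).1) =
      (List.range (m - n)).map fun j => (S (n + j)).1 :=
    List.map_congr_left fun j hj => by rw [hST (n + j) (by rw [List.mem_range] at hj; omega)]
  exact ⟨hnm, hST n hnm.le ▸ hST m le_rfl ▸ hprod ▸ hsub⟩

theorem stmt5 {G : Type*} [Group G] [Countable G] [DecidableEq G]
    (𝓕 : ℕ → Finset G) :
    IsGδ {S : ℕ → Finset G × Finset G |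
      (∃ k : ℕ → ℕ, StrictMono k ∧ ∀ n, (S n).2 = 𝓕 (k n)) ∧
      ((1 : G) ∈ (S 0).2 ∧ ∀ n, (1 : G) ∈ (S n).1 ∧ 1 < (S n).1.card) ∧
      (∀ n, (S n).2 * (S n).1 ⊆ (S (n + 1)).2) ∧
      (∀ n, ∀ c ∈ (S n).1, ∀ c' ∈ (S n).1, c ≠ c' →
        Disjoint (((S n).2).image (· * c)) (((S n).2).image (· * c'))) ∧
      (∀ g : G, ∀ n : ℕ, ∃ m, n < m ∧
        ({g} : Finset G) * (S n).2 *
          ((List.range (m - n)).map fun j => (S (n + j)).1).prod ⊆ (S m).2)} := by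
  simp only [ofPred_and]
  refine (isGδ_setOf_exists_strictMono_eq_comp Prod.snd 𝓕).inter
    ((IsGδ.inter ?unit ?cells).inter (IsGδ.inter ?II (IsGδ.inter ?III ?cover)))
  case unit =>
    exact (isOpen_setOf_of_eq_of_le 0 fun S T hST hS => hST 0 le_rfl ▸ hS).isGδ
  case cells =>
    exact .setOf_forall fun n =>
      (isOpen_setOf_of_eq_of_le n fun S T hST hS => hST n le_rfl ▸ hS).isGδ
  case II =>
    exact .setOf_forall fun n => (isOpen_setOf_of_eq_of_le (n + 1) fun S T hST hS =>
      hST n n.le_succ ▸ hST (n + 1) le_rfl ▸ hS).isGδ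
  case III =>
    exact .setOf_forall fun n =>
      (isOpen_setOf_of_eq_of_le n fun S T hST hS => hST n le_rfl ▸ hS).isGδ
  case cover =>
    exact .setOf_forall fun g => .setOf_forall fun n =>
      (isOpen_setOf_exists_singleton_mul_prod_subset g n).isGδ
end

section
/- Let G be a group and let H ⊆ G be a finite subset that tiles G, i.e., there is a subset 𝓒 ⊆ G such that G = ⋃_{c∈𝓒} Hc and Hc ∩ Hc' = ∅ for all distinct c, c' ∈ 𝓒. Let F ⊆ G be finite, and put F° := {f ∈ F : HH^{−1}f ⊆ F} and C := {c ∈ 𝓒 : F° ∩ Hc ≠ ∅}. Then F° ⊆ HC ⊆ F; in particular, #F° ≤ #C · #H ≤ #F. -/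
open Pointwise

/-!
Every point of `F°` lies in some tile `Hc` with `c ∈ 𝓒`, and that `c` is in `C` by definition,
so `F° ⊆ HC`. Conversely, if `h' c ∈ F°` then `h c = (h h'⁻¹)(h' c) ∈ HH⁻¹F° ⊆ F`, so `HC ⊆ F`.
The tiles `Hc`, `c ∈ C`, are pairwise disjoint translates of `H`, hence `#(HC) = #C · #H`.
-/

namespace Finset

variable {G : Type*} [Group G] [DecidableEq G]

theorem card_mul_of_pairwiseDisjoint_image_mul_right {H C : Finset G}
    (hdisj : (C : Set G).PairwiseDisjoint fun c => H.image (· * c)) :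
    (H * C).card = C.card * H.card := by
  have htranslate (c : G) : MulOpposite.op c • H = H.image (· * c) := by
    simp [smul_finset_def]
  rw [← biUnion_op_smul_finset, card_biUnion (by simpa only [htranslate] using hdisj)]
  exact sum_const_nat fun c _ => card_smul_finset _ _

end Finset

namespace Set

variable {G : Type*} [Group G]

theorem ncard_mul_of_pairwiseDisjoint_image_mul_right [DecidableEq G] (H : Finset G)
    {C : Set G} (hC : C.Finite) (hdisj : C.PairwiseDisjoint fun c => H.image (· * c)) :
    ((H : Set G) * C).ncard = C.ncard * H.card := by
  lift C to Finset G using hC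
  rw [← Finset.coe_mul, ncard_coe_finset, ncard_coe_finset]
  exact Finset.card_mul_of_pairwiseDisjoint_image_mul_right hdisj

variable {H C S F : Set G}

theorem subset_mul_of_forall_exists_mul_eq (hS : ∀ x ∈ S, ∃ c ∈ C, ∃ h ∈ H, h * c = x) :
    S ⊆ H * C := by
  intro x hx
  obtain ⟨c, hc, h, hh, rfl⟩ := hS x hx
  exact mul_mem_mul hh hc

theorem mul_subset_of_forall_exists_mul_mem
    (hS : ∀ f ∈ S, ∀ h ∈ H, ∀ h' ∈ H, h * h'⁻¹ * f ∈ F)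
    (hC : ∀ c ∈ C, ∃ h ∈ H, h * c ∈ S) : H * C ⊆ F := by
  rintro _ ⟨h, hh, c, hc, rfl⟩
  obtain ⟨h', hh', hh'c⟩ := hC c hc
  simpa using hS _ hh'c h hh h' hh'

theorem subset_inv_mul_of_forall_exists_mul_mem (hC : ∀ c ∈ C, ∃ h ∈ H, h * c ∈ S) :
    C ⊆ H⁻¹ * S := by
  intro c hc
  obtain ⟨h, hh, hhc⟩ := hC c hc
  exact ⟨h⁻¹, inv_mem_inv.2 hh, h * c, hhc, by group⟩

end Set

theorem stmt6 {G : Type*} [Group G] [DecidableEq G]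
    (H : Finset G) (𝓒 : Set G)
    (hcover : ∀ x : G, ∃ c ∈ 𝓒, ∃ h ∈ H, h * c = x)
    (hdisj : ∀ c ∈ 𝓒, ∀ c' ∈ 𝓒, c ≠ c' →
      Disjoint (H.image (· * c)) (H.image (· * c')))
    (F F₀ : Finset G)
    (hF₀ : ∀ f : G, f ∈ F₀ ↔ f ∈ F ∧ ∀ h ∈ H, ∀ h' ∈ H, h * h'⁻¹ * f ∈ F)
    (C : Set G)
    (hC : C = {c | c ∈ 𝓒 ∧ ∃ h ∈ H, h * c ∈ F₀}) :
    (↑F₀ : Set G) ⊆ (↑H : Set G) * C ∧ (↑H : Set G) * C ⊆ (↑F : Set G) ∧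
      C.Finite ∧ F₀.card ≤ C.ncard * H.card ∧ C.ncard * H.card ≤ F.card := by
  have hC𝓒 : C ⊆ 𝓒 := fun c hc => (hC ▸ hc).1
  have hCF₀ : ∀ c ∈ C, ∃ h ∈ H, h * c ∈ F₀ := fun c hc => (hC ▸ hc).2
  have hF₀C : (F₀ : Set G) ⊆ H * C := Set.subset_mul_of_forall_exists_mul_eq fun x hx => by
    obtain ⟨c, hc, h, hh, rfl⟩ := hcover x
    exact ⟨c, hC ▸ ⟨hc, h, hh, hx⟩, h, hh, rfl⟩
  have hCF : (H : Set G) * C ⊆ F :=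
    Set.mul_subset_of_forall_exists_mul_mem (fun f hf => ((hF₀ f).1 hf).2) hCF₀
  have hfin : C.Finite := (H.finite_toSet.inv.mul F₀.finite_toSet).subset
    (Set.subset_inv_mul_of_forall_exists_mul_mem hCF₀)
  have hcard : ((H : Set G) * C).ncard = C.ncard * H.card :=
    Set.ncard_mul_of_pairwiseDisjoint_image_mul_right H hfin
      fun c hc c' hc' => hdisj c (hC𝓒 hc) c' (hC𝓒 hc')
  refine ⟨hF₀C, hCF, hfin, ?_, ?_⟩
  · simpa [hcard] using Set.ncard_le_ncard hF₀C (H.finite_toSet.mul hfin)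
  · simpa [hcard] using Set.ncard_le_ncard hCF F.finite_toSet
end

section
/- Let r, t be positive integers with t ≥ 3, and let a : {1,…,r} → ℕ and b : {1,…,t} → ℕ. If b is i-periodic for some i ∈ {1,…,t−2}, then a⋄b is ri-periodic. -/
/-!
A shift by a multiple of `r` preserves residues modulo `r`: away from the multiples of `r`
the map `a⋄b` only sees `a`, which the shift does not move, while on `r * k` it reads
`b k`, so the shift by `r * i` becomes the shift by `i` of `b`.
-/

/-- The map a⋄b : {1,…,rt} → ℕ: (a⋄b)(i) = a(j) if i ≡ j (mod r), 1 ≤ j < r,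
and (a⋄b)(rk) = a(r) + b(k). -/
def diamond (r : ℕ) (a b : ℕ → ℕ) : ℕ → ℕ := fun i =>
  if r ∣ i then a r + b (i / r) else a (i % r)

section Diamond

variable {r : ℕ} (a b : ℕ → ℕ)

theorem diamond_mul (hr : 0 < r) (k : ℕ) : diamond r a b (r * k) = a r + b k := by
  simp only [diamond, dvd_mul_right, if_true, Nat.mul_div_cancel_left _ hr]

theorem diamond_mul_add_of_not_dvd (i : ℕ) {j : ℕ} (hj : ¬ r ∣ j) :
    diamond r a b (r * i + j) = diamond r a b j := by
  have hij : ¬ r ∣ r * i + j := (Nat.dvd_add_right (dvd_mul_right r i)).not.mpr hj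
  simp only [diamond, if_neg hij, if_neg hj, Nat.mul_add_mod]

end Diamond

theorem stmt10_general (r t : ℕ) (hr : 0 < r) (a b : ℕ → ℕ)
    (i : ℕ)
    (hb : ∀ j, 1 ≤ j → j ≤ t - 1 - i → b (i + j) = b j) :
    ∀ j, 1 ≤ j → j ≤ r * t - 1 - r * i →
      diamond r a b (r * i + j) = diamond r a b j := by
  intro j hj1 hj2
  by_cases hdvd : r ∣ j
  · obtain ⟨k, rfl⟩ := hdvd
    have hk1 : 1 ≤ k := Nat.pos_of_ne_zero (by rintro rfl; simp at hj1)
    have hk2 : k ≤ t - 1 - i := by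
      have : r * (i + k) < r * t := by rw [Nat.mul_add]; omega
      have := Nat.lt_of_mul_lt_mul_left this
      omega
    rw [← Nat.mul_add, diamond_mul a b hr, diamond_mul a b hr, hb k hk1 hk2]
  · exact diamond_mul_add_of_not_dvd a b i hdvd

theorem stmt10 (r t : ℕ) (hr : 0 < r) (ht : 3 ≤ t) (a b : ℕ → ℕ)
    (i : ℕ) (hi1 : 1 ≤ i) (hi2 : i ≤ t - 2)
    (hb : ∀ j, 1 ≤ j → j ≤ t - 1 - i → b (i + j) = b j) :
    ∀ j, 1 ≤ j → j ≤ r * t - 1 - r * i →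
      diamond r a b (r * i + j) = diamond r a b j :=
  stmt10_general r t hr a b i hb
end

section
/- Let r, t be positive integers with t ≥ 2, and let a : {1,…,r} → ℕ and b : {1,…,t} → ℕ. If a⋄b is i-periodic for some i with 1 ≤ i ≤ r − 1, then b(1) = b(2) = ⋯ = b(t−1). -/
/-!
Shifting by `i` moves the position `rk - i`, which lies strictly inside a block and carries
the value `a (r - i)`, onto the block end `rk`, which carries `a r + b k`. Periodicity
therefore forces `a r + b k = a (r - i)` for every `k < t`, so these `b k` all coincide.
-/

namespace diamond

variable {r : ℕ} (a b : ℕ → ℕ)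

theorem apply_mul (hr : 0 < r) (k : ℕ) : diamond r a b (r * k) = a r + b k := by
  simp [diamond, Nat.mul_div_cancel_left k hr]

theorem apply_mul_sub {i k : ℕ} (hi : 0 < i) (hir : i < r) (hk : 0 < k) :
    diamond r a b (r * k - i) = a (r - i) := by
  obtain ⟨k, rfl⟩ : ∃ k', k = k' + 1 := ⟨k - 1, by omega⟩
  have hsplit : r * (k + 1) - i = (r - i) + r * k := by rw [mul_add_one]; omega
  have hmod : (r * (k + 1) - i) % r = r - i := by
    rw [hsplit, Nat.add_mul_mod_self_left, Nat.mod_eq_of_lt (by omega)]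
  have hndvd : ¬ r ∣ r * (k + 1) - i := by
    rw [Nat.dvd_iff_mod_eq_zero, hmod]; omega
  simp only [diamond, if_neg hndvd, hmod]

theorem add_eq_of_periodic {t i : ℕ} {a b : ℕ → ℕ} (hi : 0 < i) (hir : i < r)
    (hper : ∀ j, 1 ≤ j → j ≤ r * t - 1 - i → diamond r a b (i + j) = diamond r a b j)
    {k : ℕ} (hk : 0 < k) (hkt : k < t) : a r + b k = a (r - i) := by
  have hrk : r ≤ r * k := Nat.le_mul_of_pos_right r hk
  have hkt' : r * k < r * t := Nat.mul_lt_mul_of_pos_left hkt (by omega)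
  have h := hper (r * k - i) (by omega) (by omega)
  rwa [Nat.add_sub_of_le (by omega), apply_mul a b (by omega), apply_mul_sub a b hi hir hk] at h

end diamond

theorem stmt12_general (r t : ℕ) (a b : ℕ → ℕ)
    (i : ℕ) (hi1 : 1 ≤ i) (hi2 : i ≤ r - 1)
    (hper : ∀ j, 1 ≤ j → j ≤ r * t - 1 - i →
      diamond r a b (i + j) = diamond r a b j) :
    ∀ k, 1 ≤ k → k ≤ t - 1 → b k = b 1 := by
  intro k hk1 hk2
  have hir : i < r := by omega
  have hbk := diamond.add_eq_of_periodic hi1 hir hper hk1 (by omega : k < t)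
  have hb1 := diamond.add_eq_of_periodic hi1 hir hper one_pos (by omega : 1 < t)
  omega

theorem stmt12 (r t : ℕ) (hr : 0 < r) (ht : 2 ≤ t) (a b : ℕ → ℕ)
    (i : ℕ) (hi1 : 1 ≤ i) (hi2 : i ≤ r - 1)
    (hper : ∀ j, 1 ≤ j → j ≤ r * t - 1 - i →
      diamond r a b (i + j) = diamond r a b j) :
    ∀ k, 1 ≤ k → k ≤ t - 1 → b k = b 1 :=
  stmt12_general r t a b i hi1 hi2 hper
end

section
/- Let (X, μ) and (Y, ν) be probability spaces and let λ be a probability measure on X × Y whose image under the first coordinate projection is μ and whose image under the second coordinate projection is ν. Suppose R : Y → Y is an invertible measure-preserving transformation of (Y, ν) (a bimeasurable bijection with ν ∘ R^{−1} = ν) which is ergodic, and suppose λ is invariant under the map id_X × R : X × Y → X × Y. Then λ equals the product measure μ × ν. -/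
open MeasureTheory

/- Fix a measurable A ⊆ X and push λ restricted to A × Y down to Y. This measure is
R-invariant (because λ is id × R-invariant) and is dominated by the second marginal ν.
An invariant finite measure absolutely continuous with respect to an ergodic one is a
constant multiple of it, and evaluating on Y identifies the constant as μ A. Hence
λ (A × B) = μ A * ν B on rectangles, which determines λ. -/

theorem ergodic_of_measure_symmDiff_preimage_eq_zero {α : Type*} [MeasurableSpace α]
    {μ : Measure α} [IsProbabilityMeasure μ] {f : α → α} (hf : MeasurePreserving f μ μ)
    (h : ∀ s : Set α, MeasurableSet s → μ (symmDiff (f ⁻¹' s) s) = 0 → μ s = 0 ∨ μ s = 1) :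
    Ergodic f μ := by
  refine ⟨hf, ⟨fun s hs hfs ↦ Filter.eventuallyConst_set'.2 ?_⟩⟩
  rcases h s hs (by simp [hfs]) with h0 | h1
  · exact .inl (ae_eq_empty.2 h0)
  · exact .inr (ae_eq_univ.2 ((prob_compl_eq_zero_iff hs).2 h1))

namespace MeasureTheory.Measure

variable {X Y : Type*} [MeasurableSpace X] [MeasurableSpace Y]

noncomputable def sndMarginalOn (lam : Measure (X × Y)) (A : Set X) : Measure Y :=
  (lam.restrict (Prod.fst ⁻¹' A)).map Prod.snd

variable {lam : Measure (X × Y)} {A : Set X}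

theorem sndMarginalOn_apply {B : Set Y} (hB : MeasurableSet B) :
    lam.sndMarginalOn A B = lam (A ×ˢ B) := by
  rw [sndMarginalOn, map_apply measurable_snd hB, restrict_apply (measurable_snd hB),
    Set.inter_comm, Set.prod_eq]

theorem sndMarginalOn_univ (hA : MeasurableSet A) :
    lam.sndMarginalOn A Set.univ = lam.map Prod.fst A := by
  rw [sndMarginalOn_apply MeasurableSet.univ, Set.prod_univ, map_apply measurable_fst hA]

instance [IsFiniteMeasure lam] : IsFiniteMeasure (lam.sndMarginalOn A) := by
  rw [sndMarginalOn]; infer_instance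

theorem sndMarginalOn_absolutelyContinuous : lam.sndMarginalOn A ≪ lam.map Prod.snd :=
  absolutelyContinuous_of_le (map_mono restrict_le_self measurable_snd)

theorem measurePreserving_sndMarginalOn {f : Y → Y} (hf : Measurable f)
    (hinv : lam.map (Prod.map id f) = lam) (hA : MeasurableSet A) :
    MeasurePreserving f (lam.sndMarginalOn A) (lam.sndMarginalOn A) := by
  refine ⟨hf, ext fun B hB ↦ ?_⟩
  rw [map_apply hf hB, sndMarginalOn_apply (hf hB), sndMarginalOn_apply hB]
  conv_rhs => rw [← hinv, map_apply (measurable_id.prodMap hf) (hA.prod hB)]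
  rfl

end MeasureTheory.Measure

theorem stmt15 {X Y : Type*} [MeasurableSpace X] [MeasurableSpace Y]
    (μ : Measure X) (ν : Measure Y)
    [IsProbabilityMeasure μ] [IsProbabilityMeasure ν]
    (lam : Measure (X × Y)) [IsProbabilityMeasure lam]
    (hfst : lam.map Prod.fst = μ) (hsnd : lam.map Prod.snd = ν)
    (R : Y ≃ᵐ Y) (hR : MeasurePreserving R ν ν)
    (herg : ∀ B : Set Y, MeasurableSet B → ν (symmDiff (⇑R ⁻¹' B) B) = 0 →
      ν B = 0 ∨ ν B = 1)
    (hinv : lam.map (Prod.map id ⇑R) = lam) :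
    lam = μ.prod ν := by
  have hErg : Ergodic R ν := ergodic_of_measure_symmDiff_preimage_eq_zero hR herg
  refine (Measure.prod_eq fun A B hA hB ↦ ?_).symm
  obtain ⟨c, hc⟩ := hErg.eq_smul_of_absolutelyContinuous
    (Measure.measurePreserving_sndMarginalOn R.measurable hinv hA)
    (hsnd ▸ Measure.sndMarginalOn_absolutelyContinuous)
  have hcμ : c = μ A := by
    simpa [hc, ← hfst] using Measure.sndMarginalOn_univ (lam := lam) hA
  rw [← Measure.sndMarginalOn_apply hB, hc, hcμ, Measure.smul_apply, smul_eq_mul]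
end

section
/- Let G be a countable group and let T = (T_g)_{g∈G} and T' = (T'_g)_{g∈G} be measure-preserving actions of G by Borel automorphisms on standard σ-finite measure spaces (X, μ) and (X', μ'). Assume both actions are ergodic (every measurable set invariant under all T_g is null or has null complement, and likewise for T') and essentially free (for every g ≠ 1 the set of fixed points of T_g is null, and likewise for T'). Let A ⊆ X and A' ⊆ X' be measurable sets with μ(A) = μ'(A') > 0, and let θ : A → A' be a Borel bijection with μ(θ^{−1}(B)) = μ'(B) for every measurable B ⊆ A', such that for every x ∈ A and g ∈ G: T_g x ∈ A if and only if T'_g(θx) ∈ A', and θ(T_g x) = T'_g(θx) whenever T_g x ∈ A. Then T and T' are measure-theoretically conjugate: there exist conull measurable subsets X_0 ⊆ X and X'_0 ⊆ X', invariant under the respective actions, and a Borel bijection Φ : X_0 → X'_0 with μ(Φ^{−1}(B)) = μ'(B) for every measurable B ⊆ X'_0 and Φ(T_g x) = T'_g(Φ x) for all g ∈ G and x ∈ X_0. -/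
/-!
The saturation `G • A` is invariant and contains `A`, so by ergodicity it is conull; likewise
for `A'`. A point `x` of the saturation has some `g` with `g • x ∈ A`, and
`Φ x := g⁻¹ • θ (g • x)` does not depend on `g` because `θ` is equivariant wherever this makes
sense; the same recipe applied to `θ.symm` inverts `Φ`. On each of the countably many pieces
`g⁻¹ • A` the map `Φ` is `θ` conjugated by translations, which gives measurability and
preservation of measure piece by piece.
-/

open MeasureTheory Set

section Saturation

variable {G X : Type*} [Group G] [MulAction G X] {A : Set X}

variable (G) in
def saturation (A : Set X) : Set X := {x | ∃ g : G, g • x ∈ A}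

theorem subset_saturation : A ⊆ saturation G A := fun x hx => ⟨1, by rwa [one_smul]⟩

theorem saturation_eq_iUnion : saturation G A = ⋃ g : G, (g • ·) ⁻¹' A := by
  ext; simp [saturation]

theorem smul_mem_saturation_iff {g : G} {x : X} :
    g • x ∈ saturation G A ↔ x ∈ saturation G A := by
  constructor
  · rintro ⟨k, hk⟩
    exact ⟨k * g, by rwa [mul_smul]⟩
  · rintro ⟨k, hk⟩
    exact ⟨k * g⁻¹, by rwa [mul_smul, inv_smul_smul]⟩

theorem preimage_smul_saturation (g : G) : (g • ·) ⁻¹' saturation G A = saturation G A :=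
  Set.ext fun _ => smul_mem_saturation_iff

variable [MeasurableSpace X]

theorem measurableSet_saturation [Countable G] [MeasurableConstSMul G X]
    (hA : MeasurableSet A) : MeasurableSet (saturation G A) := by
  rw [saturation_eq_iUnion]
  exact .iUnion fun g => measurable_const_smul g hA

theorem measure_compl_saturation_eq_zero [Countable G] [MeasurableConstSMul G X] {μ : Measure X}
    (herg : ∀ B : Set X, MeasurableSet B → (∀ g : G, (g • ·) ⁻¹' B = B) → μ B = 0 ∨ μ Bᶜ = 0)
    (hA : MeasurableSet A) (hμA : μ A ≠ 0) : μ (saturation G A)ᶜ = 0 :=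
  (herg _ (measurableSet_saturation hA) preimage_smul_saturation).resolve_left
    fun h => hμA (measure_mono_null subset_saturation h)

end Saturation

section PartialConjugacy

variable {G X X' : Type*} [Group G] [MulAction G X] [MulAction G X'] {A : Set X} {A' : Set X'}

variable (G) in
/-- `θ` conjugates the restrictions of the two actions to `A` and `A'`. Unlike the equivalent pair
of conditions in `Equiv.IsPartialConjugacy.of_smul_mem_iff`, this form is visibly symmetric under
`θ ↦ θ.symm`. -/
def Equiv.IsPartialConjugacy (θ : A ≃ A') : Prop :=
  ∀ (x y : A) (g : G), g • (x : X) = y ↔ g • (θ x : X') = θ y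

variable (G) [Nonempty X'] in
open Classical in
noncomputable def Equiv.extendAlongOrbits (θ : A ≃ A') (x : X) : X' :=
  if h : ∃ g : G, g • x ∈ A then h.choose⁻¹ • (θ ⟨_, h.choose_spec⟩ : X')
  else Classical.arbitrary X'

theorem Equiv.extendAlongOrbits_of_notMem [Nonempty X'] {θ : A ≃ A'} {x : X}
    (hx : x ∉ saturation G A) : θ.extendAlongOrbits G x = Classical.arbitrary X' :=
  dif_neg hx

namespace Equiv.IsPartialConjugacy

variable {θ : A ≃ A'}

theorem of_smul_mem_iff (hiff : ∀ (x : A) (g : G), g • (x : X) ∈ A ↔ g • (θ x : X') ∈ A')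
    (heq : ∀ (x : A) (g : G) (h : g • (x : X) ∈ A), (θ ⟨g • x, h⟩ : X') = g • (θ x : X')) :
    θ.IsPartialConjugacy G := by
  intro x y g
  constructor
  · intro h
    obtain ⟨y, hy⟩ := y
    subst h
    exact (heq x g hy).symm
  · intro h
    have hx : g • (x : X) ∈ A := (hiff x g).2 (h ▸ (θ y).2)
    have hθxy : θ ⟨g • x, hx⟩ = θ y := Subtype.ext ((heq x g hx).trans h)
    exact congrArg Subtype.val (θ.injective hθxy)

theorem symm (hθ : θ.IsPartialConjugacy G) : θ.symm.IsPartialConjugacy G := fun x y g => by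
  simpa using (hθ (θ.symm x) (θ.symm y) g).symm

theorem smul_mem_iff (hθ : θ.IsPartialConjugacy G) (x : A) (g : G) :
    g • (x : X) ∈ A ↔ g • (θ x : X') ∈ A' := by
  constructor
  · intro h
    exact ((hθ x ⟨_, h⟩ g).1 rfl).symm ▸ (θ _).2
  · intro h
    have hx := (hθ.symm (θ x) ⟨_, h⟩ g).1 rfl
    rw [symm_apply_apply] at hx
    exact hx ▸ (θ.symm _).2

variable [Nonempty X']

theorem extendAlongOrbits_eq_of_smul_eq (hθ : θ.IsPartialConjugacy G) {x : X} {g : G} {a : A}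
    (h : g • x = a) : θ.extendAlongOrbits G x = g⁻¹ • (θ a : X') := by
  have hx : ∃ k : G, k • x ∈ A := ⟨g, h ▸ a.2⟩
  rw [extendAlongOrbits, dif_pos hx]
  set k := hx.choose
  have hgk : (g * k⁻¹) • (k • x) = a := by rw [smul_smul, inv_mul_cancel_right, h]
  rw [← (hθ ⟨k • x, hx.choose_spec⟩ a (g * k⁻¹)).1 hgk, smul_smul,
    inv_mul_cancel_left]

theorem extendAlongOrbits_coe (hθ : θ.IsPartialConjugacy G) (a : A) :
    θ.extendAlongOrbits G a = θ a := by
  rw [hθ.extendAlongOrbits_eq_of_smul_eq (one_smul G (a : X)), inv_one, one_smul]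

theorem extendAlongOrbits_smul (hθ : θ.IsPartialConjugacy G) {x : X}
    (hx : x ∈ saturation G A) (g : G) :
    θ.extendAlongOrbits G (g • x) = g • θ.extendAlongOrbits G x := by
  obtain ⟨k, hk⟩ := hx
  have hgx : (k * g⁻¹) • g • x = (⟨k • x, hk⟩ : A) := by rw [smul_smul, inv_mul_cancel_right]
  rw [hθ.extendAlongOrbits_eq_of_smul_eq hgx,
    hθ.extendAlongOrbits_eq_of_smul_eq (a := ⟨_, hk⟩) rfl, smul_smul, mul_inv_rev, inv_inv]

theorem smul_extendAlongOrbits_mem_iff (hθ : θ.IsPartialConjugacy G) {x : X}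
    (hx : x ∈ saturation G A) (g : G) :
    g • θ.extendAlongOrbits G x ∈ A' ↔ g • x ∈ A := by
  obtain ⟨k, hk⟩ := hx
  rw [hθ.extendAlongOrbits_eq_of_smul_eq (a := ⟨_, hk⟩) rfl, smul_smul,
    ← hθ.smul_mem_iff, smul_smul, inv_mul_cancel_right]

theorem mapsTo_extendAlongOrbits (hθ : θ.IsPartialConjugacy G) :
    MapsTo (θ.extendAlongOrbits G) (saturation G A) (saturation G A') := fun _ hx =>
  let ⟨k, hk⟩ := hx
  ⟨k, (hθ.smul_extendAlongOrbits_mem_iff hx k).2 hk⟩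

theorem extendAlongOrbits_symm_extendAlongOrbits [Nonempty X] (hθ : θ.IsPartialConjugacy G)
    {x : X} (hx : x ∈ saturation G A) :
    θ.symm.extendAlongOrbits G (θ.extendAlongOrbits G x) = x := by
  obtain ⟨k, hk⟩ := hx
  have hΦx : k • θ.extendAlongOrbits G x = (θ ⟨_, hk⟩ : X') := by
    rw [hθ.extendAlongOrbits_eq_of_smul_eq (a := ⟨_, hk⟩) rfl, smul_inv_smul]
  rw [hθ.symm.extendAlongOrbits_eq_of_smul_eq hΦx, symm_apply_apply, inv_smul_smul]

theorem bijOn_extendAlongOrbits [Nonempty X] (hθ : θ.IsPartialConjugacy G) :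
    BijOn (θ.extendAlongOrbits G) (saturation G A) (saturation G A') :=
  InvOn.bijOn ⟨fun _ hx => hθ.extendAlongOrbits_symm_extendAlongOrbits hx,
    fun _ hy => by simpa using hθ.symm.extendAlongOrbits_symm_extendAlongOrbits hy⟩
    hθ.mapsTo_extendAlongOrbits hθ.symm.mapsTo_extendAlongOrbits

theorem inter_preimage_extendAlongOrbits (hθ : θ.IsPartialConjugacy G) (C : Set X') :
    A ∩ θ.extendAlongOrbits G ⁻¹' C = Subtype.val '' (θ ⁻¹' (Subtype.val ⁻¹' C)) := by
  ext x
  constructor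
  · rintro ⟨hx, hC⟩
    refine ⟨⟨x, hx⟩, ?_, rfl⟩
    rwa [mem_preimage, mem_preimage, ← hθ.extendAlongOrbits_coe]
  · rintro ⟨a, ha, rfl⟩
    exact ⟨a.2, by rwa [mem_preimage, hθ.extendAlongOrbits_coe]⟩

theorem preimage_smul_inter_preimage_extendAlongOrbits (hθ : θ.IsPartialConjugacy G) (g : G)
    (C : Set X') :
    (g • ·) ⁻¹' (A ∩ θ.extendAlongOrbits G ⁻¹' ((g⁻¹ • ·) ⁻¹' C)) =
      (g • ·) ⁻¹' A ∩ θ.extendAlongOrbits G ⁻¹' C := by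
  ext x
  simp only [mem_preimage, mem_inter_iff]
  exact and_congr_right fun hx => by rw [hθ.extendAlongOrbits_smul ⟨g, hx⟩, inv_smul_smul]

theorem saturation_inter_preimage_extendAlongOrbits (hθ : θ.IsPartialConjugacy G) (C : Set X') :
    saturation G A ∩ θ.extendAlongOrbits G ⁻¹' C =
      ⋃ g : G, (g • ·) ⁻¹' (A ∩ θ.extendAlongOrbits G ⁻¹' ((g⁻¹ • ·) ⁻¹' C)) := by
  simp only [hθ.preimage_smul_inter_preimage_extendAlongOrbits, saturation_eq_iUnion,
    iUnion_inter]

end Equiv.IsPartialConjugacy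

end PartialConjugacy

section Measure

variable {G X X' : Type*} [Group G] [MulAction G X] [MulAction G X'] [MeasurableSpace X]
  [MeasurableSpace X'] {A : Set X} {A' : Set X'} {θ : A ≃ A'} [Nonempty X']

namespace Equiv.IsPartialConjugacy

variable [MeasurableConstSMul G X'] {μ : Measure X} {μ' : Measure X'} [SMulInvariantMeasure G X μ]
  [SMulInvariantMeasure G X' μ']

theorem measure_saturation_inter_preimage_of_subset (hθ : θ.IsPartialConjugacy G)
    (hθpres : ∀ B : Set X', MeasurableSet B → B ⊆ A' →
      μ (Subtype.val '' (θ ⁻¹' (Subtype.val ⁻¹' B))) = μ' B)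
    {g : G} {C : Set X'} (hC : MeasurableSet C) (hCA' : C ⊆ (g • ·) ⁻¹' A') :
    μ (saturation G A ∩ θ.extendAlongOrbits G ⁻¹' C) = μ' C := by
  have hpull : saturation G A ∩ θ.extendAlongOrbits G ⁻¹' C =
      (g • ·) ⁻¹' (A ∩ θ.extendAlongOrbits G ⁻¹' ((g⁻¹ • ·) ⁻¹' C)) := by
    rw [hθ.preimage_smul_inter_preimage_extendAlongOrbits]
    ext x
    constructor
    · rintro ⟨hx, hxC⟩
      exact ⟨(hθ.smul_extendAlongOrbits_mem_iff hx g).1 (hCA' hxC), hxC⟩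
    · rintro ⟨hx, hxC⟩
      exact ⟨⟨g, hx⟩, hxC⟩
  have hgCA' : (g⁻¹ • ·) ⁻¹' C ⊆ A' := fun y hy => by simpa using hCA' hy
  rw [hpull, measure_preimage_smul, hθ.inter_preimage_extendAlongOrbits,
    hθpres _ (measurable_const_smul g⁻¹ hC) hgCA', measure_preimage_smul]

variable [Countable G] [MeasurableConstSMul G X]

theorem measurable_extendAlongOrbits (hθ : θ.IsPartialConjugacy G) (hA : MeasurableSet A)
    (hθmeas : Measurable fun a : A => (θ a : X')) : Measurable (θ.extendAlongOrbits G) := by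
  intro C hC
  have hsat : MeasurableSet (saturation G A ∩ θ.extendAlongOrbits G ⁻¹' C) := by
    rw [hθ.saturation_inter_preimage_extendAlongOrbits]
    refine .iUnion fun g => measurable_const_smul g ?_
    rw [hθ.inter_preimage_extendAlongOrbits]
    exact hA.subtype_image (hθmeas (measurable_const_smul g⁻¹ hC))
  have hsplit : θ.extendAlongOrbits G ⁻¹' C = (saturation G A ∩ θ.extendAlongOrbits G ⁻¹' C) ∪
      ((saturation G A)ᶜ ∩ {_x | Classical.arbitrary X' ∈ C}) := by
    ext x
    by_cases hx : x ∈ saturation G A <;> simp [hx, extendAlongOrbits_of_notMem]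
  rw [hsplit]
  exact hsat.union ((measurableSet_saturation hA).compl.inter (.const _))

theorem measure_saturation_inter_preimage (hθ : θ.IsPartialConjugacy G) (hA : MeasurableSet A)
    (hA' : MeasurableSet A') (hθmeas : Measurable fun a : A => (θ a : X'))
    (hθpres : ∀ B : Set X', MeasurableSet B → B ⊆ A' →
      μ (Subtype.val '' (θ ⁻¹' (Subtype.val ⁻¹' B))) = μ' B)
    {B : Set X'} (hB : MeasurableSet B) (hBA' : B ⊆ saturation G A') :
    μ (saturation G A ∩ θ.extendAlongOrbits G ⁻¹' B) = μ' B := by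
  have hΦ := hθ.measurable_extendAlongOrbits hA hθmeas
  set ν := (μ.restrict (saturation G A)).map (θ.extendAlongOrbits G)
  have hν : ∀ C, MeasurableSet C → ν C = μ (saturation G A ∩ θ.extendAlongOrbits G ⁻¹' C) :=
    fun C hC => by rw [Measure.map_apply hΦ hC, Measure.restrict_apply (hΦ hC), inter_comm]
  have hν_eq : ν.restrict (saturation G A') = μ'.restrict (saturation G A') := by
    rw [saturation_eq_iUnion, Measure.restrict_iUnion_congr]
    intro g
    ext C hC
    have hCg := hC.inter (measurable_const_smul g hA')
    rw [Measure.restrict_apply hC, Measure.restrict_apply hC, hν _ hCg]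
    exact hθ.measure_saturation_inter_preimage_of_subset hθpres hCg inter_subset_right
  rw [← hν B hB, ← Measure.restrict_eq_self ν hBA', hν_eq, Measure.restrict_eq_self μ' hBA']

end Equiv.IsPartialConjugacy

end Measure

theorem stmt17_general {G : Type*} [Group G] [Countable G]
    {X X' : Type*} [MeasurableSpace X] [MeasurableSpace X']
    (μ : Measure X) (μ' : Measure X')
    (T : G → X ≃ᵐ X) (T' : G → X' ≃ᵐ X')
    (hTmul : ∀ g h x, T (g * h) x = T g (T h x))
    (hT'mul : ∀ g h x, T' (g * h) x = T' g (T' h x))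
    (hTone : ∀ x, T 1 x = x) (hT'one : ∀ x, T' 1 x = x)
    (hTmp : ∀ g, MeasurePreserving (T g) μ μ)
    (hT'mp : ∀ g, MeasurePreserving (T' g) μ' μ')
    (herg : ∀ B : Set X, MeasurableSet B → (∀ g, ⇑(T g) ⁻¹' B = B) →
      μ B = 0 ∨ μ Bᶜ = 0)
    (herg' : ∀ B : Set X', MeasurableSet B → (∀ g, ⇑(T' g) ⁻¹' B = B) →
      μ' B = 0 ∨ μ' Bᶜ = 0)
    (A : Set X) (A' : Set X') (hA : MeasurableSet A) (hA' : MeasurableSet A')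
    (hApos : 0 < μ A)
    (θ : A ≃ A')
    (hθmeas : Measurable fun a : A => ((θ a : A') : X'))
    (hθpres : ∀ B : Set X', MeasurableSet B → B ⊆ A' →
      μ (Subtype.val '' (⇑θ ⁻¹' (Subtype.val ⁻¹' B))) = μ' B)
    (hiff : ∀ (x : A) (g : G), T g (x : X) ∈ A ↔ T' g ((θ x : A') : X') ∈ A')
    (heq : ∀ (x : A) (g : G) (h : T g (x : X) ∈ A),
      ((θ ⟨T g (x : X), h⟩ : A') : X') = T' g ((θ x : A') : X')) :
    ∃ (X₀ : Set X) (X₀' : Set X') (Φ : X → X'),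
      MeasurableSet X₀ ∧ MeasurableSet X₀' ∧ μ X₀ᶜ = 0 ∧ μ' X₀'ᶜ = 0 ∧
      (∀ g, ⇑(T g) ⁻¹' X₀ = X₀) ∧ (∀ g, ⇑(T' g) ⁻¹' X₀' = X₀') ∧
      Set.BijOn Φ X₀ X₀' ∧
      (Measurable fun x : X₀ => Φ (x : X)) ∧
      (∀ B : Set X', MeasurableSet B → B ⊆ X₀' → μ (X₀ ∩ Φ ⁻¹' B) = μ' B) ∧
      (∀ g : G, ∀ x ∈ X₀, Φ (T g x) = T' g (Φ x)) := by
  let : MulAction G X := { smul := fun g x => T g x, one_smul := hTone, mul_smul := hTmul }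
  let : MulAction G X' := { smul := fun g x => T' g x, one_smul := hT'one, mul_smul := hT'mul }
  have : MeasurableConstSMul G X := ⟨fun g => (T g).measurable⟩
  have : MeasurableConstSMul G X' := ⟨fun g => (T' g).measurable⟩
  have : SMulInvariantMeasure G X μ :=
    ⟨fun g _ hs => (hTmp g).measure_preimage hs.nullMeasurableSet⟩
  have : SMulInvariantMeasure G X' μ' :=
    ⟨fun g _ hs => (hT'mp g).measure_preimage hs.nullMeasurableSet⟩
  have hθ : θ.IsPartialConjugacy G := .of_smul_mem_iff hiff heq
  obtain ⟨a, ha⟩ := nonempty_of_measure_ne_zero hApos.ne'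
  have : Nonempty X := ⟨a⟩
  have : Nonempty X' := ⟨θ ⟨a, ha⟩⟩
  have hμA' : μ' A' ≠ 0 := by
    simpa [← hθpres A' hA' subset_rfl] using hApos.ne'
  exact ⟨saturation G A, saturation G A', θ.extendAlongOrbits G, measurableSet_saturation hA,
    measurableSet_saturation hA', measure_compl_saturation_eq_zero herg hA hApos.ne',
    measure_compl_saturation_eq_zero herg' hA' hμA', preimage_smul_saturation,
    preimage_smul_saturation, hθ.bijOn_extendAlongOrbits,
    (hθ.measurable_extendAlongOrbits hA hθmeas).comp measurable_subtype_coe,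
    fun _ hB hBA' => hθ.measure_saturation_inter_preimage hA hA' hθmeas hθpres hB hBA',
    fun g _ hx => hθ.extendAlongOrbits_smul hx g⟩

theorem stmt17 {G : Type*} [Group G] [Countable G]
    {X X' : Type*} [MeasurableSpace X] [MeasurableSpace X']
    [StandardBorelSpace X] [StandardBorelSpace X']
    (μ : Measure X) (μ' : Measure X') [SigmaFinite μ] [SigmaFinite μ']
    (T : G → X ≃ᵐ X) (T' : G → X' ≃ᵐ X')
    (hTmul : ∀ g h x, T (g * h) x = T g (T h x))
    (hT'mul : ∀ g h x, T' (g * h) x = T' g (T' h x))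
    (hTone : ∀ x, T 1 x = x) (hT'one : ∀ x, T' 1 x = x)
    (hTmp : ∀ g, MeasurePreserving (T g) μ μ)
    (hT'mp : ∀ g, MeasurePreserving (T' g) μ' μ')
    (herg : ∀ B : Set X, MeasurableSet B → (∀ g, ⇑(T g) ⁻¹' B = B) →
      μ B = 0 ∨ μ Bᶜ = 0)
    (herg' : ∀ B : Set X', MeasurableSet B → (∀ g, ⇑(T' g) ⁻¹' B = B) →
      μ' B = 0 ∨ μ' Bᶜ = 0)
    (hfree : ∀ g : G, g ≠ 1 → μ {x | T g x = x} = 0)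
    (hfree' : ∀ g : G, g ≠ 1 → μ' {x | T' g x = x} = 0)
    (A : Set X) (A' : Set X') (hA : MeasurableSet A) (hA' : MeasurableSet A')
    (hAA' : μ A = μ' A') (hApos : 0 < μ A)
    (θ : A ≃ A')
    (hθmeas : Measurable fun a : A => ((θ a : A') : X'))
    (hθsymm : Measurable fun a : A' => ((θ.symm a : A) : X))
    (hθpres : ∀ B : Set X', MeasurableSet B → B ⊆ A' →
      μ (Subtype.val '' (⇑θ ⁻¹' (Subtype.val ⁻¹' B))) = μ' B)
    (hiff : ∀ (x : A) (g : G), T g (x : X) ∈ A ↔ T' g ((θ x : A') : X') ∈ A')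
    (heq : ∀ (x : A) (g : G) (h : T g (x : X) ∈ A),
      ((θ ⟨T g (x : X), h⟩ : A') : X') = T' g ((θ x : A') : X')) :
    ∃ (X₀ : Set X) (X₀' : Set X') (Φ : X → X'),
      MeasurableSet X₀ ∧ MeasurableSet X₀' ∧ μ X₀ᶜ = 0 ∧ μ' X₀'ᶜ = 0 ∧
      (∀ g, ⇑(T g) ⁻¹' X₀ = X₀) ∧ (∀ g, ⇑(T' g) ⁻¹' X₀' = X₀') ∧
      Set.BijOn Φ X₀ X₀' ∧
      (Measurable fun x : X₀ => Φ (x : X)) ∧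
      (∀ B : Set X', MeasurableSet B → B ⊆ X₀' → μ (X₀ ∩ Φ ⁻¹' B) = μ' B) ∧
      (∀ g : G, ∀ x ∈ X₀, Φ (T g x) = T' g (Φ x)) :=
  stmt17_general μ μ' T T' hTmul hT'mul hTone hT'one hTmp hT'mp herg herg' A A' hA hA' hApos θ
    hθmeas hθpres hiff heq
end

section
/- Let G be a group and let (C_n)_{n≥1}, (F_n)_{n≥0} be sequences of finite subsets of G satisfying conditions (I)–(III). Then for all integers 0 ≤ l < m and all elements c_i ∈ C_i (l < i ≤ m): if F_l ∩ (F_l c_{l+1} c_{l+2} ⋯ c_m) ≠ ∅, then c_{l+1} = c_{l+2} = ⋯ = c_m = 1. Consequently, for all k ≤ l < m one has (C_{k+1} ⋯ C_l C_{l+1} ⋯ C_m) ∩ F_l = C_{k+1} ⋯ C_l, where C_{k+1} ⋯ C_l denotes the product set {c_{k+1} ⋯ c_l : c_i ∈ C_i} (interpreted as {1} when k = l). -/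
/-!
By (III), each element of `F (n-1) * C n` factors uniquely as `f * c`. If `y ∈ F l` and
`x = y * c (l+1) * ⋯ * c m ∈ F l`, then `(y * c (l+1) * ⋯ * c (m-1)) * c m` and `x * 1` are two
such factorizations with `n = m` (the `F n` increase because `1 ∈ C n`), so `c m = 1`, and
induction on `m` removes the remaining factors. For the second claim, split
`C (k+1) ⋯ C m = (C (k+1) ⋯ C l) * (C (l+1) ⋯ C m)` and use `C (k+1) ⋯ C l ⊆ F l`.
-/

open Pointwise

/-- `segProd c l n = c (l + 1) * ⋯ * c (l + n)`. -/
def segProd {M : Type*} [Monoid M] (c : ℕ → M) (l n : ℕ) : M :=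
  ((List.range n).map fun j => c (l + 1 + j)).prod

section segProd

variable {M : Type*} [Monoid M]

@[simp]
theorem segProd_zero (c : ℕ → M) (l : ℕ) : segProd c l 0 = 1 := rfl

theorem segProd_succ (c : ℕ → M) (l n : ℕ) :
    segProd c l (n + 1) = segProd c l n * c (l + 1 + n) :=
  List.prod_range_succ _ n

theorem segProd_add (c : ℕ → M) (l a b : ℕ) :
    segProd c l (a + b) = segProd c l a * segProd c (l + a) b := by
  induction b with
  | zero => simp
  | succ b ih =>
    rw [← add_assoc, segProd_succ, ih, segProd_succ, mul_assoc,
      show l + a + 1 + b = l + 1 + (a + b) by omega]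

theorem segProd_congr {c c' : ℕ → M} {l n : ℕ} (h : ∀ i, l < i → i ≤ l + n → c i = c' i) :
    segProd c l n = segProd c' l n := by
  induction n with
  | zero => rfl
  | succ n ih =>
    rw [segProd_succ, segProd_succ, ih fun i hi hin => h i hi (by omega), h _ (by omega) (by omega)]

theorem segProd_eq_one {c : ℕ → M} {l n : ℕ} (h : ∀ i, l < i → i ≤ l + n → c i = 1) :
    segProd c l n = 1 := by
  rw [segProd_congr h]
  exact List.prod_eq_one fun _ hx => by simp_all

theorem mem_segProd_iff [DecidableEq M] {D : ℕ → Finset M} {l n : ℕ} {x : M} :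
    x ∈ segProd D l n ↔ ∃ c : ℕ → M, (∀ i, l < i → i ≤ l + n → c i ∈ D i) ∧ segProd c l n = x := by
  induction n generalizing x with
  | zero => simpa [eq_comm] using fun _ => ⟨fun _ => 1, fun i hi hin => absurd hi (by omega)⟩
  | succ n ih =>
    rw [segProd_succ, Finset.mem_mul]
    constructor
    · rintro ⟨y, hy, d, hd, rfl⟩
      obtain ⟨c, hc, rfl⟩ := ih.1 hy
      refine ⟨Function.update c (l + 1 + n) d, fun i hi hin => ?_, ?_⟩
      · rcases eq_or_ne i (l + 1 + n) with rfl | hne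
        · simpa using hd
        · rw [Function.update_of_ne hne]
          exact hc i hi (by omega)
      · rw [segProd_succ, Function.update_self,
          segProd_congr fun i _ hin => Function.update_of_ne (by omega) d c]
    · rintro ⟨c, hc, rfl⟩
      exact ⟨_, ih.2 ⟨c, fun i hi hin => hc i hi (by omega), rfl⟩, _, hc _ (by omega) (by omega),
        (segProd_succ c l n).symm⟩

end segProd

section Tower

variable {G : Type*} [Monoid G] [DecidableEq G] {C F : ℕ → Finset G}

theorem monotone_of_one_mem (h1C : ∀ n, (1 : G) ∈ C (n + 1))
    (hII : ∀ n, F n * C (n + 1) ⊆ F (n + 1)) : Monotone F :=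
  monotone_nat_of_le_succ fun n x hx => hII n (mul_one x ▸ Finset.mul_mem_mul hx (h1C n))

theorem mul_segProd_subset (hII : ∀ n, F n * C (n + 1) ⊆ F (n + 1)) (l n : ℕ) :
    F l * segProd C l n ⊆ F (l + n) := by
  induction n with
  | zero => simp
  | succ n ih =>
    rw [segProd_succ, ← mul_assoc, add_right_comm l 1 n]
    exact (Finset.mul_subset_mul_right ih).trans (hII (l + n))

theorem eq_of_mul_eq_mul_of_mem (hIII : ∀ n : ℕ, ∀ c ∈ C (n + 1), ∀ c' ∈ C (n + 1), c ≠ c' →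
      Disjoint ((F n).image (· * c)) ((F n).image (· * c')))
    {n : ℕ} {a b c c' : G} (ha : a ∈ F n) (hb : b ∈ F n) (hc : c ∈ C (n + 1))
    (hc' : c' ∈ C (n + 1)) (h : a * c = b * c') : c = c' := by
  by_contra hne
  exact Finset.disjoint_left.1 (hIII n c hc c' hc' hne) (Finset.mem_image_of_mem _ ha)
    (h ▸ Finset.mem_image_of_mem (· * c') hb)

theorem eq_one_of_mul_segProd_mem (h1C : ∀ n, (1 : G) ∈ C (n + 1))
    (hII : ∀ n, F n * C (n + 1) ⊆ F (n + 1))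
    (hIII : ∀ n : ℕ, ∀ c ∈ C (n + 1), ∀ c' ∈ C (n + 1), c ≠ c' →
      Disjoint ((F n).image (· * c)) ((F n).image (· * c')))
    {l n : ℕ} {c : ℕ → G} {y : G} (hc : ∀ i, l < i → i ≤ l + n → c i ∈ C i) (hy : y ∈ F l)
    (hyc : y * segProd c l n ∈ F l) : ∀ i, l < i → i ≤ l + n → c i = 1 := by
  induction n with
  | zero => intro i hi hin; omega
  | succ n ih =>
    rw [segProd_succ, ← mul_assoc] at hyc
    have hc' (i : ℕ) (hi : l < i) (hin : i ≤ l + n) : c i ∈ C i := hc i hi (by omega)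
    have hprefix : y * segProd c l n ∈ F (l + n) :=
      mul_segProd_subset hII l n (Finset.mul_mem_mul hy (mem_segProd_iff.2 ⟨c, hc', rfl⟩))
    have hlast : c (l + 1 + n) = 1 := by
      refine eq_of_mul_eq_mul_of_mem hIII hprefix
        (monotone_of_one_mem h1C hII (Nat.le_add_right l n) hyc) ?_ (h1C _) (mul_one _).symm
      exact add_right_comm l 1 n ▸ hc _ (by omega) (by omega)
    rw [hlast, mul_one] at hyc
    intro i hi hin
    rcases eq_or_lt_of_le hin with rfl | hlt
    · rwa [show l + (n + 1) = l + 1 + n by omega]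
    · exact ih hc' hyc i hi (by omega)

theorem one_mem_segProd (h1C : ∀ n, (1 : G) ∈ C (n + 1)) (l n : ℕ) : (1 : G) ∈ segProd C l n := by
  refine mem_segProd_iff.2 ⟨fun _ => 1, fun i hi _ => ?_, segProd_eq_one fun _ _ _ => rfl⟩
  obtain ⟨j, rfl⟩ : ∃ j, i = j + 1 := ⟨i - 1, by omega⟩
  exact h1C j

theorem segProd_subset (hF0 : (1 : G) ∈ F 0) (h1C : ∀ n, (1 : G) ∈ C (n + 1))
    (hII : ∀ n, F n * C (n + 1) ⊆ F (n + 1)) (k n : ℕ) : segProd C k n ⊆ F (k + n) :=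
  fun x hx => mul_segProd_subset hII k n
    (one_mul x ▸ Finset.mul_mem_mul (monotone_of_one_mem h1C hII (Nat.zero_le k) hF0) hx)

theorem segProd_add_inter (hF0 : (1 : G) ∈ F 0) (h1C : ∀ n, (1 : G) ∈ C (n + 1))
    (hII : ∀ n, F n * C (n + 1) ⊆ F (n + 1))
    (hIII : ∀ n : ℕ, ∀ c ∈ C (n + 1), ∀ c' ∈ C (n + 1), c ≠ c' →
      Disjoint ((F n).image (· * c)) ((F n).image (· * c')))
    (k a b : ℕ) : segProd C k (a + b) ∩ F (k + a) = segProd C k a := by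
  have hPF := segProd_subset hF0 h1C hII k a
  ext x
  simp only [segProd_add, Finset.mem_inter, Finset.mem_mul]
  constructor
  · rintro ⟨⟨y, hy, z, hz, rfl⟩, hx⟩
    obtain ⟨c, hc, rfl⟩ := mem_segProd_iff.1 hz
    rwa [segProd_eq_one (eq_one_of_mul_segProd_mem h1C hII hIII hc (hPF hy) hx), mul_one]
  · exact fun hx => ⟨⟨x, hx, 1, one_mem_segProd h1C _ _, mul_one x⟩, hPF hx⟩

end Tower

theorem stmt19 {G : Type*} [Group G] [DecidableEq G]
    (C F : ℕ → Finset G)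
    (hI0 : (1 : G) ∈ F 0)
    (hI : ∀ n : ℕ, (1 : G) ∈ C (n + 1) ∧ 1 < (C (n + 1)).card)
    (hII : ∀ n : ℕ, F n * C (n + 1) ⊆ F (n + 1))
    (hIII : ∀ n : ℕ, ∀ c ∈ C (n + 1), ∀ c' ∈ C (n + 1), c ≠ c' →
      Disjoint ((F n).image (· * c)) ((F n).image (· * c'))) :
    (∀ (l m : ℕ), l < m → ∀ c : ℕ → G, (∀ i, l < i → i ≤ m → c i ∈ C i) →
      ((F l) ∩ (F l).image
        (· * ((List.range (m - l)).map fun j => c (l + 1 + j)).prod)).Nonempty →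
      ∀ i, l < i → i ≤ m → c i = 1) ∧
    (∀ (k l m : ℕ), k ≤ l → l < m →
      (((List.range (m - k)).map fun j => C (k + 1 + j)).prod : Finset G) ∩ F l =
        (((List.range (l - k)).map fun j => C (k + 1 + j)).prod : Finset G)) := by
  have h1C n := (hI n).1
  refine ⟨fun l m hlm c hc hne => ?_, fun k l m hkl hlm => ?_⟩
  · obtain ⟨x, hx⟩ := hne
    rw [Finset.mem_inter, Finset.mem_image] at hx
    obtain ⟨hx, y, hy, rfl⟩ := hx
    rw [← Nat.add_sub_cancel' hlm.le] at hc ⊢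
    exact eq_one_of_mul_segProd_mem h1C hII hIII hc hy hx
  · have := segProd_add_inter hI0 h1C hII hIII k (l - k) (m - l)
    rwa [Nat.add_sub_cancel' hkl, show l - k + (m - l) = m - k by omega] at this
end
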